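/- arXiv:2601.01160 — 9 statements merged into one kernel-verified Lean document; each statement's English description precedes it below -/
import Mathlib

section
/- Let d ≥ 1, μ > 0, t > 0, and let f : ℝ^d → ℝ be continuously differentiable and μ-strongly convex, i.e. (μ/2)‖x − y‖² ≤ f(x) − f(y) − ⟨∇f(y), x − y⟩ for all x, y ∈ ℝ^d. Then the smoothed function f_t is also μ-strongly convex: (μ/2)‖x − y‖² ≤ f_t(x) − f_t(y) − ⟨∇f_t(y), x − y⟩ for all x, y ∈ ℝ^d. -/
/-!
Averaging translates `x ↦ f (x + g a)` over a probability measure commutes with differentiation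
(the translates of `f'` are uniformly bounded near any point), so the Bregman divergence of the
average is the average of the Bregman divergences of the translates. Each of those is bounded
below by `μ/2 ‖x - y‖²`, since translation does not change `x - y`.
-/

open MeasureTheory RealInnerProductSpace

/-- The smoothed function `f_t(x) = 𝔼_r [f (x + t r)]`, where `r` is uniform on the closed
unit ball of `ℝ^d`. -/
noncomputable def smoothedFn {d : ℕ} (t : ℝ) (f : EuclideanSpace ℝ (Fin d) → ℝ)
    (x : EuclideanSpace ℝ (Fin d)) : ℝ :=
  ⨍ r in Metric.closedBall (0 : EuclideanSpace ℝ (Fin d)) 1, f (x + t • r)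

lemma add_mem_closedBall_of_norm_le {E : Type*} [SeminormedAddCommGroup E] {x z v : E}
    {r R : ℝ} (hz : z ∈ Metric.closedBall x r) (hv : ‖v‖ ≤ R) :
    z + v ∈ Metric.closedBall x (r + R) := by
  rw [Metric.mem_closedBall, dist_eq_norm, add_sub_right_comm]
  exact (norm_add_le _ _).trans (add_le_add (mem_closedBall_iff_norm.mp hz) hv)

section ParametricTranslates

variable {α E F : Type*} [MeasurableSpace α] {μ : Measure α} [IsFiniteMeasure μ]
  [NormedAddCommGroup E] [ProperSpace E] [NormedAddCommGroup F] {g : α → E} {R : ℝ}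

lemma integrable_comp_add_of_norm_le {f : E → F} (hf : Continuous f)
    (hg : AEStronglyMeasurable g μ) (hR : ∀ᵐ a ∂μ, ‖g a‖ ≤ R) (x : E) :
    Integrable (fun a ↦ f (x + g a)) μ := by
  obtain ⟨C, hC⟩ := (isCompact_closedBall x (0 + R)).exists_bound_of_continuousOn hf.continuousOn
  refine .of_bound (hf.comp_aestronglyMeasurable (aestronglyMeasurable_const.add hg)) C ?_
  filter_upwards [hR] with a ha
  exact hC _ (add_mem_closedBall_of_norm_le (Metric.mem_closedBall_self le_rfl) ha)

lemma hasFDerivAt_integral_comp_add [NormedSpace ℝ E] [NormedSpace ℝ F] [CompleteSpace F]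
    {f : E → F} (hf : ContDiff ℝ 1 f) (hg : AEStronglyMeasurable g μ) (hR : ∀ᵐ a ∂μ, ‖g a‖ ≤ R) (x : E) :
    HasFDerivAt (fun z ↦ ∫ a, f (z + g a) ∂μ) (∫ a, fderiv ℝ f (x + g a) ∂μ) x := by
  have hf' := hf.continuous_fderiv one_ne_zero
  obtain ⟨C, hC⟩ :=
    (isCompact_closedBall x (1 + R)).exists_bound_of_continuousOn hf'.continuousOn
  refine hasFDerivAt_integral_of_dominated_of_fderiv_le (bound := fun _ ↦ C)
    (Metric.ball_mem_nhds x one_pos)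
    (.of_forall fun z ↦ (integrable_comp_add_of_norm_le hf.continuous hg hR z).1)
    (integrable_comp_add_of_norm_le hf.continuous hg hR x)
    (integrable_comp_add_of_norm_le hf' hg hR x).1 ?_ (integrable_const C)
    (.of_forall fun a z _ ↦ (hasFDerivAt_comp_add_right (g a)).2
      ((hf.differentiable one_ne_zero _).hasFDerivAt))
  filter_upwards [hR] with a ha z hz
  exact hC _ (add_mem_closedBall_of_norm_le (Metric.ball_subset_closedBall hz) ha)

end ParametricTranslates

noncomputable def bregmanDiv {E : Type*} [NormedAddCommGroup E] [NormedSpace ℝ E]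
    (f : E → ℝ) (x y : E) : ℝ :=
  f x - f y - fderiv ℝ f y (x - y)

lemma bregmanDiv_comp_add {E : Type*} [NormedAddCommGroup E] [NormedSpace ℝ E] (f : E → ℝ)
    (x y v : E) :
    bregmanDiv f (x + v) (y + v) = f (x + v) - f (y + v) - fderiv ℝ f (y + v) (x - y) := by
  rw [bregmanDiv, add_sub_add_right_eq_sub]

section BregmanDivergence

variable {α E : Type*} [MeasurableSpace α] {μ : Measure α}
  [NormedAddCommGroup E] [NormedSpace ℝ E] [ProperSpace E]
  {f : E → ℝ} {g : α → E} {R : ℝ}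

lemma bregmanDiv_integral_comp_add [IsFiniteMeasure μ] (hf : ContDiff ℝ 1 f)
    (hg : AEStronglyMeasurable g μ) (hR : ∀ᵐ a ∂μ, ‖g a‖ ≤ R) (x y : E) :
    bregmanDiv (fun z ↦ ∫ a, f (z + g a) ∂μ) x y = ∫ a, bregmanDiv f (x + g a) (y + g a) ∂μ := by
  have hf' := hf.continuous_fderiv one_ne_zero
  have hfx := integrable_comp_add_of_norm_le hf.continuous hg hR x
  have hfy := integrable_comp_add_of_norm_le hf.continuous hg hR y
  have hDf := integrable_comp_add_of_norm_le hf' hg hR y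
  have hDfxy := integrable_comp_add_of_norm_le (hf'.clm_apply (continuous_const (y := x - y)))
    hg hR y
  simp only [bregmanDiv_comp_add]
  rw [integral_sub (f := fun a ↦ f (x + g a) - f (y + g a)) (hfx.sub hfy) hDfxy,
    integral_sub hfx hfy, bregmanDiv,
    (hasFDerivAt_integral_comp_add hf hg hR y).fderiv, ContinuousLinearMap.integral_apply hDf]

lemma le_bregmanDiv_integral_comp_add [IsProbabilityMeasure μ] (hf : ContDiff ℝ 1 f)
    (hg : AEStronglyMeasurable g μ) (hR : ∀ᵐ a ∂μ, ‖g a‖ ≤ R) {q : E → ℝ}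
    (hq : ∀ x y, q (x - y) ≤ bregmanDiv f x y) (x y : E) :
    q (x - y) ≤ bregmanDiv (fun z ↦ ∫ a, f (z + g a) ∂μ) x y := by
  have hf' := hf.continuous_fderiv one_ne_zero
  have hD : Integrable (fun a ↦ bregmanDiv f (x + g a) (y + g a)) μ := by
    simp only [bregmanDiv_comp_add]
    exact ((integrable_comp_add_of_norm_le hf.continuous hg hR x).sub
      (integrable_comp_add_of_norm_le hf.continuous hg hR y)).sub
      (integrable_comp_add_of_norm_le (hf'.clm_apply (continuous_const (y := x - y))) hg hR y)
  rw [bregmanDiv_integral_comp_add hf hg hR]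
  calc q (x - y) = ∫ _, q (x - y) ∂μ := by simp
    _ ≤ _ := integral_mono (integrable_const _) hD fun a ↦ by
      simpa only [add_sub_add_right_eq_sub] using hq (x + g a) (y + g a)

end BregmanDivergence

theorem smoothed_strongly_convex_general {d : ℕ} (μ t : ℝ)
    (f : EuclideanSpace ℝ (Fin d) → ℝ)
    (hC1 : ContDiff ℝ 1 f)
    (hsc : ∀ x y : EuclideanSpace ℝ (Fin d),
      μ / 2 * ‖x - y‖ ^ 2 ≤ f x - f y - ⟪gradient f y, x - y⟫) :
    Differentiable ℝ (smoothedFn t f) ∧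
      ∀ x y : EuclideanSpace ℝ (Fin d),
        μ / 2 * ‖x - y‖ ^ 2 ≤
          smoothedFn t f x - smoothedFn t f y - ⟪gradient (smoothedFn t f) y, x - y⟫ := by
  set B := Metric.closedBall (0 : EuclideanSpace ℝ (Fin d)) 1
  have : IsFiniteMeasure (volume.restrict B) :=
    isFiniteMeasure_restrict.2 measure_closedBall_lt_top.ne
  have : NeZero (volume B) := ⟨(Metric.measure_closedBall_pos _ _ one_pos).ne'⟩
  set P := (volume.restrict B Set.univ)⁻¹ • volume.restrict B
  -- `⨍ r in B, _` unfolds to the integral against the normalized restriction `P`.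
  have hsmooth : smoothedFn t f = fun x ↦ ∫ r, f (x + t • r) ∂P := rfl
  have hg : AEStronglyMeasurable (t • ·) P := (continuous_const_smul t).aestronglyMeasurable
  have hR : ∀ᵐ r ∂P, ‖t • r‖ ≤ |t| := by
    refine Measure.ae_smul_measure ?_ _
    filter_upwards [ae_restrict_mem measurableSet_closedBall] with r hr
    simpa [norm_smul] using mul_le_of_le_one_right (abs_nonneg t) (mem_closedBall_zero_iff.mp hr)
  refine ⟨fun x ↦ (hasFDerivAt_integral_comp_add hC1 hg hR x).differentiableAt, fun x y ↦ ?_⟩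
  have hsc' : ∀ x y, μ / 2 * ‖x - y‖ ^ 2 ≤ bregmanDiv f x y := fun x y ↦ by
    simpa only [bregmanDiv, inner_gradient_left] using hsc x y
  simpa only [hsmooth, bregmanDiv, inner_gradient_left] using
    le_bregmanDiv_integral_comp_add hC1 hg hR (q := fun v ↦ μ / 2 * ‖v‖ ^ 2) hsc' x y

theorem smoothed_strongly_convex {d : ℕ} (hd : 1 ≤ d) (μ t : ℝ) (hμ : 0 < μ) (ht : 0 < t)
    (f : EuclideanSpace ℝ (Fin d) → ℝ)
    (hC1 : ContDiff ℝ 1 f)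
    (hsc : ∀ x y : EuclideanSpace ℝ (Fin d),
      μ / 2 * ‖x - y‖ ^ 2 ≤ f x - f y - ⟪gradient f y, x - y⟫) :
    Differentiable ℝ (smoothedFn t f) ∧
      ∀ x y : EuclideanSpace ℝ (Fin d),
        μ / 2 * ‖x - y‖ ^ 2 ≤
          smoothedFn t f x - smoothedFn t f y - ⟪gradient (smoothedFn t f) y, x - y⟫ :=
  smoothed_strongly_convex_general μ t f hC1 hsc
end

section
/- Let d ≥ 1, L > 0, t > 0, and let f : ℝ^d → ℝ be convex and L-smooth, i.e. f is differentiable and ‖∇f(x) − ∇f(y)‖ ≤ L‖x − y‖ for all x, y ∈ ℝ^d. Then for every x ∈ ℝ^d one has f(x) ≤ f_t(x) ≤ f(x) + L·t². -/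
open MeasureTheory

/-! Write `f_t x = 𝔼 f (x + Y)` for `Y = t • r`, `r` uniform on the unit ball: `Y` is centred
because the ball is symmetric, and `‖Y‖ ≤ |t|`. Jensen's inequality gives
`f x = f (𝔼 (x + Y)) ≤ 𝔼 f (x + Y)`. For the upper bound, the mean value inequality applied to
`f - ⟪∇f x, ·⟫`, whose derivative is `L ‖v‖`-small on the ball of radius `‖v‖` around `x`, gives
`f (x + v) ≤ f x + ⟪∇f x, v⟫ + L ‖v‖²`; taking expectations kills the linear term. -/

open ProbabilityTheory InnerProductSpace Metric

theorem abs_sub_sub_inner_gradient_le {E : Type*} [NormedAddCommGroup E] [InnerProductSpace ℝ E]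
    [CompleteSpace E] {f : E → ℝ} {L : ℝ} (hL : 0 ≤ L) (hf : Differentiable ℝ f)
    (hlip : ∀ x y, ‖gradient f x - gradient f y‖ ≤ L * ‖x - y‖) (x v : E) :
    |f (x + v) - f x - ⟪gradient f x, v⟫_ℝ| ≤ L * ‖v‖ ^ 2 := by
  have hbound : ∀ y ∈ closedBall x ‖v‖, ‖fderiv ℝ f y - fderiv ℝ f x‖ ≤ L * ‖v‖ := by
    intro y hy
    calc ‖fderiv ℝ f y - fderiv ℝ f x‖ = ‖gradient f y - gradient f x‖ := by
          simp only [gradient, ← map_sub, LinearIsometryEquiv.norm_map]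
      _ ≤ L * ‖y - x‖ := hlip y x
      _ ≤ L * ‖v‖ := mul_le_mul_of_nonneg_left (mem_closedBall_iff_norm.1 hy) hL
  have := (convex_closedBall x ‖v‖).norm_image_sub_le_of_norm_hasFDerivWithin_le'
    (fun y _ => (hf y).hasFDerivAt.hasFDerivWithinAt) hbound
    (mem_closedBall_self (norm_nonneg v)) (by simp : x + v ∈ closedBall x ‖v‖)
  simpa [gradient, toDual_symm_apply, sq, mul_assoc] using this

section Centered

variable {Ω E : Type*} [MeasurableSpace Ω] {P : Measure Ω} [IsProbabilityMeasure P]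
  [NormedAddCommGroup E] {Y : Ω → E} {f : E → ℝ}

theorem ConvexOn.le_integral_comp_add [NormedSpace ℝ E] [CompleteSpace E]
    (hf : ConvexOn ℝ Set.univ f) (hcont : Continuous f) (hY : Integrable Y P)
    (hmean : ∫ ω, Y ω ∂P = 0) (x : E) (hfY : Integrable (fun ω => f (x + Y ω)) P) :
    f x ≤ ∫ ω, f (x + Y ω) ∂P := by
  have := hf.map_integral_le hcont.continuousOn isClosed_univ (by simp)
    ((integrable_const x).add hY : Integrable (fun ω => x + Y ω) P) hfY
  simpa [integral_add (integrable_const x) hY, hmean] using this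

theorem integral_comp_add_le_of_lipschitz_gradient [InnerProductSpace ℝ E] [CompleteSpace E]
    {L c : ℝ} (hL : 0 ≤ L) (hf : Differentiable ℝ f)
    (hlip : ∀ x y, ‖gradient f x - gradient f y‖ ≤ L * ‖x - y‖) (hY : Integrable Y P)
    (hmean : ∫ ω, Y ω ∂P = 0) (hYc : ∀ᵐ ω ∂P, ‖Y ω‖ ≤ c)
    (x : E) (hfY : Integrable (fun ω => f (x + Y ω)) P) :
    ∫ ω, f (x + Y ω) ∂P ≤ f x + L * c ^ 2 := by
  have hpt : ∀ᵐ ω ∂P, f (x + Y ω) ≤ f x + ⟪gradient f x, Y ω⟫_ℝ + L * c ^ 2 := by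
    filter_upwards [hYc] with ω hω
    have htaylor := (abs_le.1 (abs_sub_sub_inner_gradient_le hL hf hlip x (Y ω))).2
    have hsq : L * ‖Y ω‖ ^ 2 ≤ L * c ^ 2 :=
      mul_le_mul_of_nonneg_left (pow_le_pow_left₀ (norm_nonneg _) hω 2) hL
    linarith
  have hlin : Integrable (fun ω => ⟪gradient f x, Y ω⟫_ℝ) P := hY.const_inner _
  have haffine : Integrable (fun ω => f x + ⟪gradient f x, Y ω⟫_ℝ) P :=
    (integrable_const _).add hlin
  calc ∫ ω, f (x + Y ω) ∂P
      ≤ ∫ ω, (f x + ⟪gradient f x, Y ω⟫_ℝ + L * c ^ 2) ∂P :=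
        integral_mono_ae hfY (haffine.add (integrable_const _)) hpt
    _ = f x + L * c ^ 2 := by
        rw [integral_add haffine (integrable_const _),
          integral_add (integrable_const _) hlin, integral_inner hY, hmean]
        simp

end Centered

theorem setAverage_eq_integral_cond {α E : Type*} [MeasurableSpace α] [NormedAddCommGroup E]
    [NormedSpace ℝ E] (μ : Measure α) (s : Set α) (g : α → E) :
    ⨍ x in s, g x ∂μ = ∫ x, g x ∂μ[|s] := by
  rw [average, Measure.restrict_apply_univ]
  rfl

theorem integral_id_cond_eq_zero_of_neg_eq {E : Type*} [NormedAddCommGroup E] [NormedSpace ℝ E]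
    [MeasurableSpace E] [MeasurableNeg E] (μ : Measure E) [μ.IsNegInvariant] {s : Set E}
    (hs : MeasurableSet s) (hneg : -s = s) : ∫ x, x ∂μ[|s] = 0 := by
  have hmem : ∀ x, -x ∈ s ↔ x ∈ s := fun x => by rw [← Set.mem_neg, hneg]
  have hodd : ∀ x, s.indicator id (-x) = -s.indicator id x := fun x => by
    by_cases hx : x ∈ s <;> simp [hx, hmem]
  have hsym : ∫ x, s.indicator id x ∂μ = -∫ x, s.indicator id x ∂μ :=
    calc ∫ x, s.indicator id x ∂μ = ∫ x, s.indicator id (-x) ∂μ := (integral_neg_eq_self _ μ).symm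
      _ = -∫ x, s.indicator id x ∂μ := by simp only [hodd, integral_neg]
  have : IsAddTorsionFree E := .of_isTorsionFree ℝ E
  have hzero := self_eq_neg.1 hsym
  rw [integral_indicator hs] at hzero
  rw [ProbabilityTheory.cond, integral_smul_measure]
  simpa using Or.inr hzero

theorem Continuous.integrable_cond_of_isCompact {X F : Type*} [TopologicalSpace X] [T2Space X]
    [MeasurableSpace X] [OpensMeasurableSpace X] [NormedAddCommGroup F] {μ : Measure X}
    [IsFiniteMeasureOnCompacts μ] {g : X → F} (hg : Continuous g) {s : Set X}
    (hs : IsCompact s) (hμs : μ s ≠ 0) : Integrable g μ[|s] :=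
  (hg.continuousOn.integrableOn_compact hs).smul_measure (ENNReal.inv_ne_top.2 hμs)

theorem smoothed_between_smooth_general {d : ℕ} (L t : ℝ) (hL : 0 < L)
    (f : EuclideanSpace ℝ (Fin d) → ℝ)
    (hconv : ConvexOn ℝ Set.univ f)
    (hdiff : Differentiable ℝ f)
    (hsmooth : ∀ x y : EuclideanSpace ℝ (Fin d),
      ‖gradient f x - gradient f y‖ ≤ L * ‖x - y‖) :
    ∀ x : EuclideanSpace ℝ (Fin d),
      f x ≤ smoothedFn t f x ∧ smoothedFn t f x ≤ f x + L * t ^ 2 := by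
  intro x
  set B := closedBall (0 : EuclideanSpace ℝ (Fin d)) 1
  have hB : volume B ≠ 0 := (measure_closedBall_pos volume 0 one_pos).ne'
  have := cond_isProbabilityMeasure_of_finite hB measure_closedBall_lt_top.ne
  have hY : Integrable (fun r => t • r) volume[|B] :=
    (continuous_const_smul t).integrable_cond_of_isCompact (isCompact_closedBall 0 1) hB
  have hfY : Integrable (fun r => f (x + t • r)) volume[|B] :=
    Continuous.integrable_cond_of_isCompact
      (hdiff.continuous.comp (continuous_const.add (continuous_const_smul t)))
      (isCompact_closedBall 0 1) hB
  have hmean : ∫ r, t • r ∂volume[|B] = 0 := by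
    rw [integral_smul, integral_id_cond_eq_zero_of_neg_eq volume measurableSet_closedBall
      (by simp [neg_closedBall]), smul_zero]
  have hbound : ∀ᵐ r ∂volume[|B], ‖t • r‖ ≤ |t| := by
    filter_upwards [ae_cond_mem measurableSet_closedBall] with r hr
    rw [norm_smul, Real.norm_eq_abs]
    exact mul_le_of_le_one_right (abs_nonneg t) (by simpa [B] using hr)
  rw [smoothedFn, setAverage_eq_integral_cond, ← sq_abs t]
  exact ⟨hconv.le_integral_comp_add hdiff.continuous hY hmean x hfY,
    integral_comp_add_le_of_lipschitz_gradient hL.le hdiff hsmooth hY hmean hbound x hfY⟩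

theorem smoothed_between_smooth {d : ℕ} (hd : 1 ≤ d) (L t : ℝ) (hL : 0 < L) (ht : 0 < t)
    (f : EuclideanSpace ℝ (Fin d) → ℝ)
    (hconv : ConvexOn ℝ Set.univ f)
    (hdiff : Differentiable ℝ f)
    (hsmooth : ∀ x y : EuclideanSpace ℝ (Fin d),
      ‖gradient f x - gradient f y‖ ≤ L * ‖x - y‖) :
    ∀ x : EuclideanSpace ℝ (Fin d),
      f x ≤ smoothedFn t f x ∧ smoothedFn t f x ≤ f x + L * t ^ 2 :=
  smoothed_between_smooth_general L t hL f hconv hdiff hsmooth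
end

section
/- Let d ≥ 1, L > 0, t > 0, and let f : ℝ^d → ℝ be convex and L-smooth, i.e. f is differentiable and ‖∇f(x) − ∇f(y)‖ ≤ L‖x − y‖ for all x, y ∈ ℝ^d. Then the smoothed function f_t is differentiable and for every x ∈ ℝ^d one has ‖∇f(x) − ∇f_t(x)‖² ≤ L²·t². -/
/-!
Differentiating under the integral sign, `∇f_t(x)` is the average of `∇f(x + t r)` over the unit
ball. By the Lipschitz bound each of these gradients lies in the closed ball of radius `|L| |t|`
about `∇f(x)`, and that ball is convex, so it also contains their average.
-/

open MeasureTheory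

open Filter Metric Set
open scoped Pointwise

section ParametricAverage

variable {E F : Type*} [NormedAddCommGroup E] [NormedSpace ℝ E] [FiniteDimensional ℝ E]
  [MeasurableSpace E] [BorelSpace E] [NormedAddCommGroup F] [NormedSpace ℝ F]
  {μ : Measure E} [IsFiniteMeasureOnCompacts μ] {s : Set E}

/-- Near `x₀` the derivatives `fderiv f (x + t • r)` are dominated by the bound of `‖fderiv f‖`
on the compact set `closedBall x₀ 1 + t • s`. -/
theorem hasFDerivAt_setIntegral_comp_add_smul {f : E → F} (hf : ContDiff ℝ 1 f)
    (hs : IsCompact s) (t : ℝ) (x₀ : E) :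
    HasFDerivAt (fun x => ∫ r in s, f (x + t • r) ∂μ)
      (∫ r in s, fderiv ℝ f (x₀ + t • r) ∂μ) x₀ := by
  have hdiff := hf.differentiable one_ne_zero
  have hcont := hf.continuous_fderiv one_ne_zero
  have hshift (x : E) : Continuous fun r : E => x + t • r :=
    continuous_const.add (continuous_const_smul t)
  obtain ⟨C, hC⟩ := ((isCompact_closedBall x₀ 1).add (hs.smul t)).exists_bound_of_continuousOn
    hcont.continuousOn
  refine hasFDerivAt_integral_of_dominated_of_fderiv_le (F := fun x r => f (x + t • r))
    (F' := fun x r => fderiv ℝ f (x + t • r)) (bound := fun _ => C)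
    (ball_mem_nhds x₀ one_pos) ?_ ?_ ?_ ?_ ?_ ?_
  · exact Eventually.of_forall fun x => (hdiff.continuous.comp (hshift x)).aestronglyMeasurable
  · exact (hdiff.continuous.comp (hshift x₀)).continuousOn.integrableOn_compact hs
  · exact (hcont.comp (hshift x₀)).aestronglyMeasurable
  · rw [ae_restrict_iff' hs.measurableSet]
    exact Eventually.of_forall fun r hr x hx =>
      hC _ (add_mem_add (ball_subset_closedBall hx) (smul_mem_smul_set hr))
  · exact integrableOn_const hs.measure_lt_top.ne
  · exact Eventually.of_forall fun r x _ =>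
      (hdiff _).hasFDerivAt.comp x ((hasFDerivAt_id x).add_const _)

theorem hasFDerivAt_setAverage_comp_add_smul {f : E → F} (hf : ContDiff ℝ 1 f)
    (hs : IsCompact s) (t : ℝ) (x₀ : E) :
    HasFDerivAt (fun x => ⨍ r in s, f (x + t • r) ∂μ)
      (⨍ r in s, fderiv ℝ f (x₀ + t • r) ∂μ) x₀ := by
  simp only [setAverage_eq]
  exact (hasFDerivAt_setIntegral_comp_add_smul hf hs t x₀).const_smul _

end ParametricAverage

section Gradient

variable {E : Type*} [NormedAddCommGroup E] [InnerProductSpace ℝ E] {f : E → ℝ}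

theorem contDiff_one_of_continuous_gradient [CompleteSpace E] (hf : Differentiable ℝ f)
    (hg : Continuous (gradient f)) : ContDiff ℝ 1 f := by
  have hfderiv : fderiv ℝ f = fun x => InnerProductSpace.toDual ℝ E (gradient f x) := by
    funext x
    simp [gradient]
  exact contDiff_one_iff_fderiv.2
    ⟨hf, hfderiv ▸ (InnerProductSpace.toDual ℝ E).continuous.comp hg⟩

theorem hasGradientAt_setAverage_comp_add_smul [FiniteDimensional ℝ E] [MeasurableSpace E]
    [BorelSpace E] {μ : Measure E} [IsFiniteMeasureOnCompacts μ] {s : Set E} (hf : ContDiff ℝ 1 f)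
    (hs : IsCompact s) (t : ℝ) (x₀ : E) :
    HasGradientAt (fun x => ⨍ r in s, f (x + t • r) ∂μ)
      (⨍ r in s, gradient f (x₀ + t • r) ∂μ) x₀ := by
  refine (hasFDerivAt_setAverage_comp_add_smul hf hs t x₀).congr_fderiv ?_
  rw [setAverage_eq, setAverage_eq, map_smul, ← LinearIsometryEquiv.coe_toLinearIsometry,
    ← LinearIsometry.integral_comp_comm]
  simp only [LinearIsometryEquiv.coe_toLinearIsometry, gradient,
    LinearIsometryEquiv.apply_symm_apply]

end Gradient

theorem norm_sub_setAverage_le {α E : Type*} [MeasurableSpace α] [NormedAddCommGroup E]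
    [NormedSpace ℝ E] [CompleteSpace E] {μ : Measure α} {s : Set α} {g : α → E} {c : E}
    {C : ℝ} (hs : MeasurableSet s) (hμ₀ : μ s ≠ 0) (hμ : μ s ≠ ⊤)
    (hg : IntegrableOn g s μ) (hC : ∀ r ∈ s, ‖c - g r‖ ≤ C) : ‖c - ⨍ r in s, g r ∂μ‖ ≤ C := by
  have hmem : ∀ᵐ r ∂μ.restrict s, g r ∈ closedBall c C := by
    rw [ae_restrict_iff' hs]
    exact Eventually.of_forall fun r hr => by
      rw [mem_closedBall, dist_comm, dist_eq_norm]
      exact hC r hr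
  have := (convex_closedBall c C).set_average_mem isClosed_closedBall hμ₀ hμ hmem hg
  rwa [mem_closedBall, dist_comm, dist_eq_norm] at this

theorem smoothed_grad_deviation_general {d : ℕ} (L t : ℝ)
    (f : EuclideanSpace ℝ (Fin d) → ℝ)
    (hdiff : Differentiable ℝ f)
    (hsmooth : ∀ x y : EuclideanSpace ℝ (Fin d),
      ‖gradient f x - gradient f y‖ ≤ L * ‖x - y‖) :
    Differentiable ℝ (smoothedFn t f) ∧
      ∀ x : EuclideanSpace ℝ (Fin d),
        ‖gradient f x - gradient (smoothedFn t f) x‖ ^ 2 ≤ L ^ 2 * t ^ 2 := by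
  have hgrad_cont : Continuous (gradient f) :=
    (LipschitzWith.of_dist_le' fun x y => by simpa only [dist_eq_norm] using hsmooth x y).continuous
  have hball := isCompact_closedBall (0 : EuclideanSpace ℝ (Fin d)) 1
  have hgrad (x) : HasGradientAt (smoothedFn t f)
      (⨍ r in closedBall 0 1, gradient f (x + t • r)) x :=
    hasGradientAt_setAverage_comp_add_smul
      (contDiff_one_of_continuous_gradient hdiff hgrad_cont) hball t x
  refine ⟨fun x => (hgrad x).differentiableAt, fun x => ?_⟩
  have hbound : ‖gradient f x - gradient (smoothedFn t f) x‖ ≤ |L| * |t| := by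
    rw [(hgrad x).gradient]
    refine norm_sub_setAverage_le measurableSet_closedBall
      (measure_closedBall_pos _ _ one_pos).ne' measure_closedBall_lt_top.ne
      ((hgrad_cont.comp (continuous_const.add (continuous_const_smul t))).continuousOn
        |>.integrableOn_compact hball) fun r hr => ?_
    have hr : ‖r‖ ≤ 1 := by simpa using hr
    calc ‖gradient f x - gradient f (x + t • r)‖ ≤ L * ‖t • r‖ := by
          simpa using hsmooth x (x + t • r)
      _ ≤ |L| * (|t| * ‖r‖) := by
          rw [norm_smul, Real.norm_eq_abs]
          exact mul_le_mul_of_nonneg_right (le_abs_self L) (by positivity)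
      _ ≤ |L| * |t| := by
          gcongr
          exact mul_le_of_le_one_right (abs_nonneg t) hr
  calc ‖gradient f x - gradient (smoothedFn t f) x‖ ^ 2 ≤ (|L| * |t|) ^ 2 := by gcongr
    _ = L ^ 2 * t ^ 2 := by rw [mul_pow, sq_abs, sq_abs]

theorem smoothed_grad_deviation {d : ℕ} (hd : 1 ≤ d) (L t : ℝ) (hL : 0 < L) (ht : 0 < t)
    (f : EuclideanSpace ℝ (Fin d) → ℝ)
    (hconv : ConvexOn ℝ Set.univ f)
    (hdiff : Differentiable ℝ f)
    (hsmooth : ∀ x y : EuclideanSpace ℝ (Fin d),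
      ‖gradient f x - gradient f y‖ ≤ L * ‖x - y‖) :
    Differentiable ℝ (smoothedFn t f) ∧
      ∀ x : EuclideanSpace ℝ (Fin d),
        ‖gradient f x - gradient (smoothedFn t f) x‖ ^ 2 ≤ L ^ 2 * t ^ 2 :=
  smoothed_grad_deviation_general L t f hdiff hsmooth
end

section
/- Let d ≥ 1, L > 0, t > 0, and let f : ℝ^d → ℝ be L-smooth, i.e. f is differentiable and ‖∇f(x) − ∇f(y)‖ ≤ L‖x − y‖ for all x, y ∈ ℝ^d. Then for every point x ∈ ℝ^d and every unit vector e ∈ ℝ^d (‖e‖ = 1) the finite-difference gradient estimate satisfies ‖ d·((f(x + t·e) − f(x − t·e))/(2t))·e − d·⟨∇f(x), e⟩·e ‖² ≤ d²·L²·t²/4. -/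
/-!
Fencing the Taylor remainder `s ↦ f (x + s • v) - f x - s • f' x v`, whose derivative has norm at
most `L * ‖v‖ ^ 2 * s`, by `L / 2 * ‖v‖ ^ 2 * s ^ 2` bounds it by `L / 2 * ‖v‖ ^ 2` at `s = 1`.
The expansions at `x + t • e` and `x - t • e` then give
`|f (x + t • e) - f (x - t • e) - 2 * t * ⟪∇f x, e⟫| ≤ L * t ^ 2`; divide by `2 * t` and scale by `d`.
-/

open RealInnerProductSpace

section Taylor

variable {E F : Type*} [NormedAddCommGroup E] [NormedSpace ℝ E]
  [NormedAddCommGroup F] [NormedSpace ℝ F] {f : E → F} {L : ℝ} {x : E}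

theorem norm_sub_sub_fderiv_le_of_norm_fderiv_sub_le (hf : Differentiable ℝ f)
    (hf' : ∀ y, ‖fderiv ℝ f y - fderiv ℝ f x‖ ≤ L * ‖y - x‖) (v : E) :
    ‖f (x + v) - f x - fderiv ℝ f x v‖ ≤ L / 2 * ‖v‖ ^ 2 := by
  set g : ℝ → F := fun s => f (x + s • v) - f x - s • fderiv ℝ f x v
  have hg : ∀ s, HasDerivAt g (fderiv ℝ f (x + s • v) v - fderiv ℝ f x v) s := fun s => by
    have hline : HasDerivAt (fun s : ℝ => x + s • v) v s := by
      simpa using ((hasDerivAt_id s).smul_const v).const_add x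
    exact (((hf _).hasFDerivAt.comp_hasDerivAt s hline).sub_const _).sub
      ((hasDerivAt_id s).smul_const _ |>.congr_deriv (one_smul ℝ _))
  have hB : ∀ s, HasDerivAt (fun s : ℝ => L / 2 * ‖v‖ ^ 2 * s ^ 2) (L * ‖v‖ ^ 2 * s) s :=
    fun s => ((hasDerivAt_pow 2 s).const_mul (L / 2 * ‖v‖ ^ 2)).congr_deriv (by ring)
  have hbound : ∀ s ∈ Set.Ico (0 : ℝ) 1,
      ‖fderiv ℝ f (x + s • v) v - fderiv ℝ f x v‖ ≤ L * ‖v‖ ^ 2 * s := fun s hs => by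
    calc ‖fderiv ℝ f (x + s • v) v - fderiv ℝ f x v‖
        = ‖(fderiv ℝ f (x + s • v) - fderiv ℝ f x) v‖ := rfl
      _ ≤ ‖fderiv ℝ f (x + s • v) - fderiv ℝ f x‖ * ‖v‖ := ContinuousLinearMap.le_opNorm _ _
      _ ≤ L * ‖s • v‖ * ‖v‖ := by
          gcongr
          simpa using hf' (x + s • v)
      _ = L * ‖v‖ ^ 2 * s := by
          rw [norm_smul, Real.norm_of_nonneg hs.1]; ring
  simpa [g] using image_norm_le_of_norm_deriv_right_le_deriv_boundary
    (fun s _ => (hg s).continuousAt.continuousWithinAt) (fun s _ => (hg s).hasDerivWithinAt)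
    (by simp [g]) hB hbound (Set.right_mem_Icc.2 zero_le_one)

theorem norm_central_difference_sub_fderiv_le (hf : Differentiable ℝ f)
    (hf' : ∀ y, ‖fderiv ℝ f y - fderiv ℝ f x‖ ≤ L * ‖y - x‖) (v : E) :
    ‖f (x + v) - f (x - v) - (2 : ℝ) • fderiv ℝ f x v‖ ≤ L * ‖v‖ ^ 2 := by
  have hplus := norm_sub_sub_fderiv_le_of_norm_fderiv_sub_le hf hf' v
  have hminus := norm_sub_sub_fderiv_le_of_norm_fderiv_sub_le hf hf' (-v)
  rw [← sub_eq_add_neg, norm_neg, map_neg] at hminus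
  calc ‖f (x + v) - f (x - v) - (2 : ℝ) • fderiv ℝ f x v‖
      = ‖(f (x + v) - f x - fderiv ℝ f x v) - (f (x - v) - f x - -fderiv ℝ f x v)‖ := by
        congr 1; module
    _ ≤ L / 2 * ‖v‖ ^ 2 + L / 2 * ‖v‖ ^ 2 := norm_sub_le_of_le hplus hminus
    _ = L * ‖v‖ ^ 2 := by ring

end Taylor

theorem norm_fderiv_sub_eq_norm_gradient_sub {F : Type*} [NormedAddCommGroup F]
    [InnerProductSpace ℝ F] [CompleteSpace F] {f : F → ℝ} (hf : Differentiable ℝ f) (x y : F) :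
    ‖fderiv ℝ f y - fderiv ℝ f x‖ = ‖gradient f y - gradient f x‖ := by
  rw [(hf y).hasGradientAt.hasFDerivAt.fderiv, (hf x).hasGradientAt.hasFDerivAt.fderiv,
    ← map_sub, LinearIsometryEquiv.norm_map]

theorem finite_diff_variance_fixed_direction_general {d : ℕ} (L t : ℝ)
    (ht : 0 < t)
    (f : EuclideanSpace ℝ (Fin d) → ℝ)
    (hdiff : Differentiable ℝ f)
    (hsmooth : ∀ x y : EuclideanSpace ℝ (Fin d),
      ‖gradient f x - gradient f y‖ ≤ L * ‖x - y‖)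
    (x e : EuclideanSpace ℝ (Fin d)) (he : ‖e‖ = 1) :
    ‖((d : ℝ) * ((f (x + t • e) - f (x - t • e)) / (2 * t))) • e -
        ((d : ℝ) * ⟪gradient f x, e⟫) • e‖ ^ 2 ≤ (d : ℝ) ^ 2 * L ^ 2 * t ^ 2 / 4 := by
  have hcentral : |f (x + t • e) - f (x - t • e) - 2 * t * ⟪gradient f x, e⟫| ≤ L * t ^ 2 := by
    have := norm_central_difference_sub_fderiv_le hdiff
      (fun y => (norm_fderiv_sub_eq_norm_gradient_sub hdiff x y).trans_le (hsmooth y x)) (t • e)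
    rwa [(hdiff x).hasGradientAt.hasFDerivAt.fderiv, map_smul, InnerProductSpace.toDual_apply_apply,
      norm_smul, he, Real.norm_of_nonneg ht.le, mul_one, smul_eq_mul, smul_eq_mul, ← mul_assoc,
      Real.norm_eq_abs] at this
  have hquotient : |(f (x + t • e) - f (x - t • e)) / (2 * t) - ⟪gradient f x, e⟫| ≤ L * t / 2 := by
    have h2t : 0 < 2 * t := by positivity
    rw [div_sub' h2t.ne', abs_div, abs_of_pos h2t, div_le_iff₀ h2t]
    linarith
  rw [← sub_smul, ← mul_sub, norm_smul, he, mul_one, Real.norm_eq_abs, abs_mul, Nat.abs_cast]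
  calc ((d : ℝ) * |_|) ^ 2 ≤ ((d : ℝ) * (L * t / 2)) ^ 2 := by gcongr
    _ = (d : ℝ) ^ 2 * L ^ 2 * t ^ 2 / 4 := by ring

theorem finite_diff_variance_fixed_direction {d : ℕ} (hd : 1 ≤ d) (L t : ℝ)
    (hL : 0 < L) (ht : 0 < t)
    (f : EuclideanSpace ℝ (Fin d) → ℝ)
    (hdiff : Differentiable ℝ f)
    (hsmooth : ∀ x y : EuclideanSpace ℝ (Fin d),
      ‖gradient f x - gradient f y‖ ≤ L * ‖x - y‖)
    (x e : EuclideanSpace ℝ (Fin d)) (he : ‖e‖ = 1) :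
    ‖((d : ℝ) * ((f (x + t • e) - f (x - t • e)) / (2 * t))) • e -
        ((d : ℝ) * ⟪gradient f x, e⟫) • e‖ ^ 2 ≤ (d : ℝ) ^ 2 * L ^ 2 * t ^ 2 / 4 :=
  finite_diff_variance_fixed_direction_general L t ht f hdiff hsmooth x e he
end

section
/- Let a, b, u, r0 be positive reals, let N be a positive integer, and set Γ := min( ln(max(2, a·r0·N/b)) / (a·N), 1/u ). Then 0 < Γ ≤ 1/u and exp(−N·Γ·a)·r0 + Γ·b ≤ exp(−N·a/u)·r0 + (1 + ln(max(2, a·N·r0/b)))·b/(a·N). -/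
theorem stepsize_tuning (a b u r0 : ℝ) (ha : 0 < a) (hb : 0 < b) (hu : 0 < u)
    (hr0 : 0 < r0) (N : ℕ) (hN : 0 < N) :
    0 < min (Real.log (max 2 (a * r0 * N / b)) / (a * N)) (1 / u) ∧
      min (Real.log (max 2 (a * r0 * N / b)) / (a * N)) (1 / u) ≤ 1 / u ∧
      Real.exp (-(N * min (Real.log (max 2 (a * r0 * N / b)) / (a * N)) (1 / u) * a)) * r0 +
          min (Real.log (max 2 (a * r0 * N / b)) / (a * N)) (1 / u) * b ≤
        Real.exp (-(N * a / u)) * r0 +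
          (1 + Real.log (max 2 (a * N * r0 / b))) * b / (a * N) := by
  have hN' : (0:ℝ) < N := Nat.cast_pos.mpr hN
  have haN : 0 < a * N := by positivity
  have hM1 : (1:ℝ) < max 2 (a * r0 * N / b) := lt_of_lt_of_le one_lt_two (le_max_left _ _)
  have hL : 0 < Real.log (max 2 (a * r0 * N / b)) := Real.log_pos hM1
  set L := Real.log (max 2 (a * r0 * N / b)) with hLdef
  refine ⟨lt_min (by positivity) (by positivity), min_le_right _ _, ?_⟩
  have hcomm : a * N * r0 / b = a * r0 * N / b := by ring
  rw [hcomm]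
  have hexpu : 0 ≤ Real.exp (-(N * a / u)) * r0 := by positivity
  rcases le_total (L / (a * N)) (1 / u) with h | h
  · rw [min_eq_left h]
    have h1 : Real.exp (-(↑N * (L / (a * N)) * a)) = Real.exp (-L) := by
      congr 1
      field_simp
    rw [h1]
    have hexp : Real.exp (-L) = (max 2 (a * r0 * N / b))⁻¹ := by
      rw [Real.exp_neg, hLdef, Real.exp_log (by linarith)]
    have hmax : a * r0 * N / b ≤ max 2 (a * r0 * N / b) := le_max_right _ _
    have hpos : 0 < a * r0 * N / b := by positivity
    have hinv : (max 2 (a * r0 * N / b))⁻¹ ≤ b / (a * r0 * N) := by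
      rw [show b / (a * r0 * N) = (a * r0 * N / b)⁻¹ by rw [inv_div]]
      exact inv_anti₀ hpos hmax
    have hterm : Real.exp (-L) * r0 ≤ b / (a * N) := by
      rw [hexp]
      calc (max 2 (a * r0 * N / b))⁻¹ * r0 ≤ b / (a * r0 * N) * r0 := by
            exact mul_le_mul_of_nonneg_right hinv hr0.le
        _ = b / (a * N) := by field_simp
    have hL2 : L / (a * N) * b = L * b / (a * N) := by ring
    have hsum : (1 + L) * b / (a * N) = b / (a * N) + L * b / (a * N) := by ring
    nlinarith [hexpu]
  · rw [min_eq_right h]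
    have h1 : Real.exp (-(↑N * (1 / u) * a)) = Real.exp (-(N * a / u)) := by
      congr 1
      field_simp
    rw [h1]
    have h2 : 1 / u * b ≤ L / (a * N) * b := mul_le_mul_of_nonneg_right h hb.le
    have h3 : L / (a * N) * b ≤ (1 + L) * b / (a * N) := by
      rw [div_mul_eq_mul_div, div_le_div_iff₀ haN haN]
      nlinarith
    linarith
end

section
/- Let (Ω, F, P) be a probability space, let d ≥ 1 and m ≥ 0 be integers, and let X_0, X_1, …, X_m : Ω → ℝ^d be integrable random vectors. Let J : Ω → ℕ be a random variable, independent of (X_0, …, X_m), with P(J = j) = 2^{−j} for every integer j ≥ 1. Define the multilevel Monte Carlo estimator G := X_0 + 2^J·(X_J − X_{J−1}) on the event {1 ≤ J ≤ m}, and G := X_0 on the event {J > m}. Then E[G] = E[X_m]. -/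
/-!
On the event `{J = j}` the estimator adds the correction `2^j (X_j - X_{j-1})` to `X_0`. Since `J`
is independent of the `X_i` and `P(J = j) = 2^{-j}`, the weight `2^j` cancels in expectation and
level `j` contributes `E X_j - E X_{j-1}`; summing over `1 ≤ j ≤ m` telescopes to
`E X_m - E X_0`.
-/

open MeasureTheory ProbabilityTheory Finset

theorem Finset.sum_Icc_one_sub_pred {G : Type*} [AddCommGroup G] (f : ℕ → G) (m : ℕ) :
    ∑ j ∈ Icc 1 m, (f j - f (j - 1)) = f m - f 0 := by
  induction m with
  | zero => simp
  | succ m ih =>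
    rw [sum_Icc_succ_top (by omega), ih, Nat.add_sub_cancel]
    abel

theorem Finset.sum_indicator_preimage_singleton {Ω E : Type*} [AddCommMonoid E]
    (J : Ω → ℕ) (f : ℕ → Ω → E) (s : Finset ℕ) (ω : Ω) :
    ∑ j ∈ s, (J ⁻¹' {j}).indicator (f j) ω = if J ω ∈ s then f (J ω) ω else 0 := by
  classical
  simp only [Set.indicator_apply, Set.mem_preimage, Set.mem_singleton_iff]
  exact sum_ite_eq s (J ω) fun j => f j ω

theorem two_pow_mul_toReal_half_pow (j : ℕ) :
    (2 : ℝ) ^ j * ((1 / 2 : ENNReal) ^ j).toReal = 1 := by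
  rw [ENNReal.toReal_pow, ← mul_pow]
  norm_num

section Independence

variable {Ω E : Type*} [MeasurableSpace Ω] {P : Measure Ω}
  [NormedAddCommGroup E] [NormedSpace ℝ E] [MeasurableSpace E] [BorelSpace E]

theorem ProbabilityTheory.IndepFun.setIntegral_preimage_eq_smul_integral {β : Type*}
    [MeasurableSpace β] {J : Ω → β} {Y : Ω → E} (hJY : IndepFun J Y P) (hJ : Measurable J)
    (hY : AEStronglyMeasurable Y P) {s : Set β} (hs : MeasurableSet s) :
    ∫ ω in J ⁻¹' s, Y ω ∂P = P.real (J ⁻¹' s) • ∫ ω, Y ω ∂P := by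
  have hind : IndepFun (fun ω => (J ⁻¹' s).indicator (1 : Ω → ℝ) ω) Y P :=
    hJY.comp (measurable_one.indicator hs) measurable_id
  rw [← integral_indicator_one (hJ hs), ← integral_indicator (hJ hs),
    ← hind.integral_fun_smul_eq_smul_integral
      (measurable_one.indicator (hJ hs)).aestronglyMeasurable hY]
  congr 1 with ω
  by_cases hω : ω ∈ J ⁻¹' s <;> simp [hω]

theorem setIntegral_two_pow_smul_sub_eq_sub [SecondCountableTopology E] {m j : ℕ}
    (hj1 : 1 ≤ j) (hjm : j ≤ m) (X : ℕ → Ω → E) (hXint : ∀ i ≤ m, Integrable (X i) P)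
    (J : Ω → ℕ) (hJmeas : Measurable J)
    (hindep : IndepFun J (fun ω (i : Fin (m + 1)) => X i ω) P)
    (hJj : P {ω | J ω = j} = (1 / 2 : ENNReal) ^ j) :
    ∫ ω in J ⁻¹' {j}, (2 : ℝ) ^ j • (X j ω - X (j - 1) ω) ∂P
      = ∫ ω, X j ω ∂P - ∫ ω, X (j - 1) ω ∂P := by
  have hJΔ : IndepFun J (fun ω => (2 : ℝ) ^ j • (X j ω - X (j - 1) ω)) P :=
    hindep.comp measurable_id (ψ := fun v : Fin (m + 1) → E =>
      (2 : ℝ) ^ j • (v ⟨j, by omega⟩ - v ⟨j - 1, by omega⟩)) (by fun_prop)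
  have hΔint : Integrable (fun ω => (2 : ℝ) ^ j • (X j ω - X (j - 1) ω)) P :=
    ((hXint j hjm).sub (hXint (j - 1) (by omega))).smul ((2 : ℝ) ^ j)
  rw [hJΔ.setIntegral_preimage_eq_smul_integral hJmeas hΔint.aestronglyMeasurable
      (measurableSet_singleton j), Measure.real, show J ⁻¹' {j} = {ω | J ω = j} from rfl, hJj,
    integral_smul, smul_smul, mul_comm, two_pow_mul_toReal_half_pow, one_smul,
    integral_sub (hXint j hjm) (hXint (j - 1) (by omega))]

end Independence

theorem mlmc_unbiased_general {Ω : Type*} [MeasurableSpace Ω] (P : Measure Ω)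
    [IsProbabilityMeasure P] (d m : ℕ)
    (X : ℕ → Ω → EuclideanSpace ℝ (Fin d))
    (hXint : ∀ j ≤ m, Integrable (X j) P)
    (J : Ω → ℕ) (hJmeas : Measurable J)
    (hindep : IndepFun J (fun ω (i : Fin (m + 1)) => X i ω) P)
    (hJlaw : ∀ j : ℕ, 1 ≤ j → P {ω | J ω = j} = (1 / 2 : ENNReal) ^ j) :
    ∫ ω, (if 1 ≤ J ω ∧ J ω ≤ m then
        X 0 ω + ((2 : ℝ) ^ J ω) • (X (J ω) ω - X (J ω - 1) ω)
      else X 0 ω) ∂P = ∫ ω, X m ω ∂P := by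
  set Δ : ℕ → Ω → EuclideanSpace ℝ (Fin d) := fun j ω => (2 : ℝ) ^ j • (X j ω - X (j - 1) ω)
  have hlevel_int : ∀ j ∈ Icc 1 m, Integrable ((J ⁻¹' {j}).indicator (Δ j)) P := fun j hj =>
    (((hXint j (mem_Icc.1 hj).2).sub (hXint (j - 1) (by grind))).smul ((2 : ℝ) ^ j)).indicator
      (hJmeas (measurableSet_singleton j))
  calc _ = ∫ ω, X 0 ω + ∑ j ∈ Icc 1 m, (J ⁻¹' {j}).indicator (Δ j) ω ∂P := by
        congr 1 with ω
        simp only [sum_indicator_preimage_singleton, mem_Icc]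
        split_ifs <;> simp [Δ]
    _ = ∫ ω, X 0 ω ∂P + ∑ j ∈ Icc 1 m, (∫ ω, X j ω ∂P - ∫ ω, X (j - 1) ω ∂P) := by
        rw [integral_add (hXint 0 m.zero_le) (integrable_finsetSum _ hlevel_int),
          integral_finsetSum _ hlevel_int]
        refine congrArg _ (sum_congr rfl fun j hj => ?_)
        obtain ⟨hj1, hjm⟩ := mem_Icc.1 hj
        rw [integral_indicator (hJmeas (measurableSet_singleton j)),
          setIntegral_two_pow_smul_sub_eq_sub hj1 hjm X hXint J hJmeas hindep (hJlaw j hj1)]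
    _ = ∫ ω, X m ω ∂P := by
        rw [sum_Icc_one_sub_pred (fun j => ∫ ω, X j ω ∂P)]
        abel

theorem mlmc_unbiased {Ω : Type*} [MeasurableSpace Ω] (P : Measure Ω)
    [IsProbabilityMeasure P] (d m : ℕ) (hd : 1 ≤ d)
    (X : ℕ → Ω → EuclideanSpace ℝ (Fin d))
    (hXmeas : ∀ j, Measurable (X j))
    (hXint : ∀ j ≤ m, Integrable (X j) P)
    (J : Ω → ℕ) (hJmeas : Measurable J)
    (hindep : IndepFun J (fun ω (i : Fin (m + 1)) => X i ω) P)
    (hJlaw : ∀ j : ℕ, 1 ≤ j → P {ω | J ω = j} = (1 / 2 : ENNReal) ^ j) :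
    ∫ ω, (if 1 ≤ J ω ∧ J ω ≤ m then
        X 0 ω + ((2 : ℝ) ^ J ω) • (X (J ω) ω - X (J ω - 1) ω)
      else X 0 ω) ∂P = ∫ ω, X m ω ∂P :=
  mlmc_unbiased_general P d m X hXint J hJmeas hindep hJlaw
end

section
/- Let (Ω, F, P) be a probability space, let d ≥ 1 and m ≥ 0 be integers, and let X_0, X_1, …, X_m : Ω → ℝ^d be square-integrable random vectors. Let J : Ω → ℕ be a random variable, independent of (X_0, …, X_m), with P(J = j) = 2^{−j} for every integer j ≥ 1. Define the multilevel Monte Carlo estimator G := X_0 + 2^J·(X_J − X_{J−1}) on the event {1 ≤ J ≤ m}, and G := X_0 on the event {J > m}. Then E[‖G − X_0‖²] = Σ_{j=1}^m 2^j · E[‖X_j − X_{j−1}‖²]. -/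
open MeasureTheory ProbabilityTheory

/-! On `{J = j}` with `1 ≤ j ≤ m` the correction is `2 ^ j • (X j - X (j - 1))`, and elsewhere it
vanishes, so its squared norm is `∑ j, 1{J = j} · 4 ^ j ‖X j - X (j - 1)‖²`. Independence of `J`
from the `X`'s factors each expectation as `P(J = j) · 4 ^ j E‖X j - X (j - 1)‖²`, and
`P(J = j) · 4 ^ j = 2 ^ j`. -/

open Finset in
lemma norm_sq_mlmc_correction_eq_sum {E : Type*} [NormedAddCommGroup E] [NormedSpace ℝ E]
    (y : E) (x : ℕ → E) (n m : ℕ) :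
    ‖(if 1 ≤ n ∧ n ≤ m then y + (2 : ℝ) ^ n • (x n - x (n - 1)) else y) - y‖ ^ 2 =
      ∑ j ∈ Icc 1 m, (4 : ℝ) ^ j * (if n = j then ‖x j - x (j - 1)‖ ^ 2 else 0) := by
  split_ifs with hn
  · rw [sum_eq_single_of_mem n (mem_Icc.mpr hn) fun j _ hj => by simp [Ne.symm hj], if_pos rfl,
      add_sub_cancel_left, norm_smul, mul_pow, Real.norm_of_nonneg (by positivity), ← pow_mul,
      mul_comm n 2, pow_mul]
    norm_num [mul_comm]
  · rw [sub_self, norm_zero, sum_eq_zero fun j hj => by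
      rw [if_neg (by rintro rfl; exact hn (mem_Icc.mp hj)), mul_zero]]
    norm_num

lemma ProbabilityTheory.IndepFun.integral_indicator_preimage {Ω α : Type*} [MeasurableSpace Ω]
    [MeasurableSpace α] {P : Measure Ω} {J : Ω → α} {Z : Ω → ℝ} (h : IndepFun J Z P)
    (hJ : Measurable J) (hZ : AEStronglyMeasurable Z P) {s : Set α} (hs : MeasurableSet s) :
    ∫ ω, (J ⁻¹' s).indicator Z ω ∂P = P.real (J ⁻¹' s) * ∫ ω, Z ω ∂P := by
  have hind : Measurable (s.indicator (1 : α → ℝ)) := measurable_one.indicator hs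
  have hindep : IndepFun (s.indicator 1 ∘ J) Z P := h.comp hind measurable_id
  have hsplit : (J ⁻¹' s).indicator Z = (s.indicator 1 ∘ J) * Z := by
    ext ω
    by_cases hω : J ω ∈ s <;> simp [hω]
  rw [hsplit, hindep.integral_mul_eq_mul_integral (hind.comp hJ).aestronglyMeasurable hZ,
    ← integral_indicator_one (hJ hs)]
  rfl

theorem mlmc_second_moment_general {Ω : Type*} [MeasurableSpace Ω] (P : Measure Ω)
    [IsProbabilityMeasure P] (d m : ℕ)
    (X : ℕ → Ω → EuclideanSpace ℝ (Fin d))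
    (hXsq : ∀ j ≤ m, MemLp (X j) 2 P)
    (J : Ω → ℕ) (hJmeas : Measurable J)
    (hindep : IndepFun J (fun ω (i : Fin (m + 1)) => X i ω) P)
    (hJlaw : ∀ j : ℕ, 1 ≤ j → P {ω | J ω = j} = (1 / 2 : ENNReal) ^ j) :
    ∫ ω, ‖(if 1 ≤ J ω ∧ J ω ≤ m then
          X 0 ω + ((2 : ℝ) ^ J ω) • (X (J ω) ω - X (J ω - 1) ω)
        else X 0 ω) - X 0 ω‖ ^ 2 ∂P =
      ∑ j ∈ Finset.Icc 1 m, (2 : ℝ) ^ j * ∫ ω, ‖X j ω - X (j - 1) ω‖ ^ 2 ∂P := by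
  set Δ : ℕ → Ω → ℝ := fun j ω => ‖X j ω - X (j - 1) ω‖ ^ 2
  have hΔ : ∀ j ∈ Finset.Icc 1 m, Integrable (Δ j) P ∧ IndepFun J (Δ j) P := by
    intro j hj
    obtain ⟨-, hjm⟩ := Finset.mem_Icc.mp hj
    have hΔLp : MemLp (fun ω => X j ω - X (j - 1) ω) 2 P := (hXsq j hjm).sub (hXsq _ (by omega))
    have hψ : Measurable fun v : Fin (m + 1) → EuclideanSpace ℝ (Fin d) =>
        ‖v ⟨j, by omega⟩ - v ⟨j - 1, by omega⟩‖ ^ 2 := by fun_prop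
    exact ⟨(memLp_two_iff_integrable_sq_norm hΔLp.1).mp hΔLp, hindep.comp measurable_id hψ⟩
  have hlevel : ∀ j ω, (if J ω = j then Δ j ω else 0) = (J ⁻¹' {j}).indicator (Δ j) ω := by
    intro j ω
    by_cases hJ : J ω = j <;> simp [hJ]
  calc _ = ∫ ω, ∑ j ∈ Finset.Icc 1 m, (4 : ℝ) ^ j * (J ⁻¹' {j}).indicator (Δ j) ω ∂P :=
        integral_congr_ae (.of_forall fun ω =>
          (norm_sq_mlmc_correction_eq_sum (X 0 ω) (X · ω) (J ω) m).trans
            (Finset.sum_congr rfl fun j _ => by rw [← hlevel]))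
    _ = ∑ j ∈ Finset.Icc 1 m, (4 : ℝ) ^ j * P.real (J ⁻¹' {j}) * ∫ ω, Δ j ω ∂P := by
        rw [integral_finsetSum _ fun j hj => ?_]
        · refine Finset.sum_congr rfl fun j hj => ?_
          rw [integral_const_mul, (hΔ j hj).2.integral_indicator_preimage hJmeas
            (hΔ j hj).1.1 (measurableSet_singleton j), mul_assoc]
        · exact ((hΔ j hj).1.indicator (hJmeas (measurableSet_singleton j))).const_mul _
    _ = _ := by
        refine Finset.sum_congr rfl fun j hj => ?_
        simp only [measureReal_def, Set.preimage, Set.mem_singleton_iff]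
        rw [hJlaw j (Finset.mem_Icc.mp hj).1, ENNReal.toReal_pow, ← mul_pow]
        norm_num [Δ]

theorem mlmc_second_moment {Ω : Type*} [MeasurableSpace Ω] (P : Measure Ω)
    [IsProbabilityMeasure P] (d m : ℕ) (hd : 1 ≤ d)
    (X : ℕ → Ω → EuclideanSpace ℝ (Fin d))
    (hXmeas : ∀ j, Measurable (X j))
    (hXsq : ∀ j ≤ m, MemLp (X j) 2 P)
    (J : Ω → ℕ) (hJmeas : Measurable J)
    (hindep : IndepFun J (fun ω (i : Fin (m + 1)) => X i ω) P)
    (hJlaw : ∀ j : ℕ, 1 ≤ j → P {ω | J ω = j} = (1 / 2 : ENNReal) ^ j) :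
    ∫ ω, ‖(if 1 ≤ J ω ∧ J ω ≤ m then
          X 0 ω + ((2 : ℝ) ^ J ω) • (X (J ω) ω - X (J ω - 1) ω)
        else X 0 ω) - X 0 ω‖ ^ 2 ∂P =
      ∑ j ∈ Finset.Icc 1 m, (2 : ℝ) ^ j * ∫ ω, ‖X j ω - X (j - 1) ω‖ ^ 2 ∂P :=
  mlmc_second_moment_general P d m X hXsq J hJmeas hindep hJlaw
end

section
/- Let d ≥ 1, L > 0, μ > 0, and let f : ℝ^d → ℝ be L-smooth (differentiable with ‖∇f(x) − ∇f(y)‖ ≤ L‖x − y‖ for all x, y) and μ-strongly convex ((μ/2)‖x − y‖² ≤ f(x) − f(y) − ⟨∇f(y), x − y⟩ for all x, y). Let γ > 0, p > 0, η ≥ 1, α > 0, and β be real parameters with β·p·η^{−1} − 1 ≠ 0; set θ := (p·η^{−1} − 1)/(β·p·η^{−1} − 1) and assume θ > 0. Let x, x_f, x* ∈ ℝ^d, set x_g := θ·x_f + (1 − θ)·x, let ĝ : Ω → ℝ^d be a square-integrable random vector on a probability space (Ω, F, P), and define the random points x_f⁺ := x_g − p·γ·ĝ and x⁺ := η·x_f⁺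 + (p − η)·x_f + (1 − p)(1 − β)·x + (1 − p)·β·x_g. Then E[‖x⁺ − x*‖²] ≤ (1 + α·p·γ·η)(1 − β)‖x − x*‖² + (1 + α·p·γ·η)·β·‖x_g − x*‖² + (1 + α·p·γ·η)(β² − β)‖x − x_g‖² + p²·η²·γ²·E[‖ĝ‖²] − 2·η²·γ·⟨∇f(x_g), x_g + (p·η^{−1} − 1)·x_f − η^{−1}·p·x*⟩ + (p·η·γ/α)·‖E[ĝ] − ∇f(x_g)‖². -/
open MeasureTheory RealInnerProductSpace

/-! With `z = β • xg + (1 - β) • x - xstar`, the choice of `θ` makes the new iterate satisfy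
`x⁺ - xstar = z - (p γ η) • ĝ` and turns the direction paired with `∇f(xg)` into `(p / η) • z`.
Expanding `E‖z - (p γ η) • ĝ‖²` leaves the cross term `⟪z, E ĝ - ∇f(xg)⟫`, which Young's
inequality with weight `α` absorbs into `α p γ η ‖z‖²` and the bias term; finally `‖z‖²` splits
into the three distances by the norm identity for an affine combination. -/

section InnerProductSpace

variable {E : Type*} [NormedAddCommGroup E] [InnerProductSpace ℝ E]

theorem norm_smul_add_one_sub_smul_sq (β : ℝ) (a b : E) :
    ‖β • a + (1 - β) • b‖ ^ 2 =
      β * ‖a‖ ^ 2 + (1 - β) * ‖b‖ ^ 2 - β * (1 - β) * ‖a - b‖ ^ 2 := by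
  simp only [← real_inner_self_eq_norm_sq, inner_sub_left, inner_sub_right, inner_add_left,
    inner_add_right, real_inner_smul_left, real_inner_smul_right, real_inner_comm a b]
  ring

theorem two_mul_real_inner_le_add_mul_sq {α : ℝ} (hα : 0 < α) (z w : E) :
    2 * ⟪z, w⟫ ≤ α * ‖z‖ ^ 2 + α⁻¹ * ‖w‖ ^ 2 :=
  calc 2 * ⟪z, w⟫ ≤ 2 * ‖z‖ * ‖w‖ := by
        rw [mul_assoc]; exact mul_le_mul_of_nonneg_left (real_inner_le_norm z w) two_pos.le
    _ ≤ α * ‖z‖ ^ 2 + α⁻¹ * ‖w‖ ^ 2 := two_mul_le_add_mul_sq hα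

theorem integral_norm_sub_smul_sq [CompleteSpace E] {Ω : Type*} [MeasurableSpace Ω]
    {P : Measure Ω} [IsProbabilityMeasure P] {g : Ω → E} (hg : MemLp g 2 P) (z : E) (c : ℝ) :
    ∫ ω, ‖z - c • g ω‖ ^ 2 ∂P =
      ‖z‖ ^ 2 - 2 * c * ⟪z, ∫ ω, g ω ∂P⟫ + c ^ 2 * ∫ ω, ‖g ω‖ ^ 2 ∂P := by
  have hg₁ : Integrable g P := hg.integrable one_le_two
  have hinner : Integrable (fun ω ↦ 2 * c * ⟪z, g ω⟫) P := (hg₁.const_inner z).const_mul _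
  have hsq : Integrable (fun ω ↦ c ^ 2 * ‖g ω‖ ^ 2) P := hg.norm.integrable_sq.const_mul _
  have expand : ∀ ω, ‖z - c • g ω‖ ^ 2 = ‖z‖ ^ 2 - 2 * c * ⟪z, g ω⟫ + c ^ 2 * ‖g ω‖ ^ 2 := by
    intro ω
    rw [norm_sub_sq_real, real_inner_smul_right, norm_smul, mul_pow, Real.norm_eq_abs, sq_abs]
    ring
  have hlin : Integrable (fun ω ↦ ‖z‖ ^ 2 - 2 * c * ⟪z, g ω⟫) P := (integrable_const _).sub hinner
  simp only [expand]
  rw [integral_add hlin hsq, integral_sub (integrable_const _) hinner, integral_const_mul,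
    integral_const_mul, integral_inner hg₁, integral_const, probReal_univ, one_smul]

end InnerProductSpace

theorem mul_sub_eq_of_eq_div {θ β p η : ℝ} (hη : η ≠ 0) (hden : β * p * η⁻¹ - 1 ≠ 0)
    (hθ : θ = (p * η⁻¹ - 1) / (β * p * η⁻¹ - 1)) : θ * (β * p - η) = p - η :=
  calc θ * (β * p - η) = η * (θ * (β * p * η⁻¹ - 1)) := by field_simp
    _ = η * (p * η⁻¹ - 1) := by rw [hθ, div_mul_cancel₀ _ hden]
    _ = p - η := by field_simp

section AcceleratedStep

variable {V : Type*} [AddCommGroup V] [Module ℝ V]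
variable {θ β p η : ℝ} {x xf xg : V}

theorem accelerated_step_sub_eq (hθ : θ * (β * p - η) = p - η) (hxg : xg = θ • xf + (1 - θ) • x)
    (c : ℝ) (v xstar : V) :
    (η • (xg - c • v) + (p - η) • xf + ((1 - p) * (1 - β)) • x + ((1 - p) * β) • xg) - xstar =
      (β • xg + (1 - β) • x - xstar) - (η * c) • v := by
  rw [hxg]
  linear_combination (norm := module) hθ • (x - xf)

theorem accelerated_step_direction_eq (hη : η ≠ 0) (hθ : θ * (β * p - η) = p - η)
    (hxg : xg = θ • xf + (1 - θ) • x) (xstar : V) :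
    xg + (p * η⁻¹ - 1) • xf - (η⁻¹ * p) • xstar = (η⁻¹ * p) • (β • xg + (1 - β) • x - xstar) := by
  rw [hxg]
  linear_combination (norm := match_scalars <;> field_simp <;> ring) (η⁻¹ * hθ) • (x - xf)

end AcceleratedStep

theorem accelerated_step_recursion_general {d : ℕ}
    (f : EuclideanSpace ℝ (Fin d) → ℝ)
    (γ p η α β θ : ℝ) (hγ : 0 < γ) (hp : 0 < p) (hη : 1 ≤ η) (hα : 0 < α)
    (hden : β * p * η⁻¹ - 1 ≠ 0)
    (hθdef : θ = (p * η⁻¹ - 1) / (β * p * η⁻¹ - 1))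
    (x xf xstar : EuclideanSpace ℝ (Fin d))
    {Ω : Type*} [MeasurableSpace Ω] (P : Measure Ω) [IsProbabilityMeasure P]
    (g : Ω → EuclideanSpace ℝ (Fin d)) (hg : MemLp g 2 P)
    (xg : EuclideanSpace ℝ (Fin d)) (hxg : xg = θ • xf + (1 - θ) • x) :
    ∫ ω, ‖(η • (xg - (p * γ) • g ω) + (p - η) • xf + ((1 - p) * (1 - β)) • x +
          ((1 - p) * β) • xg) - xstar‖ ^ 2 ∂P ≤
      (1 + α * p * γ * η) * (1 - β) * ‖x - xstar‖ ^ 2 +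
        (1 + α * p * γ * η) * β * ‖xg - xstar‖ ^ 2 +
        (1 + α * p * γ * η) * (β ^ 2 - β) * ‖x - xg‖ ^ 2 +
        p ^ 2 * η ^ 2 * γ ^ 2 * ∫ ω, ‖g ω‖ ^ 2 ∂P -
        2 * η ^ 2 * γ * ⟪gradient f xg, xg + (p * η⁻¹ - 1) • xf - (η⁻¹ * p) • xstar⟫ +
        p * η * γ / α * ‖(∫ ω, g ω ∂P) - gradient f xg‖ ^ 2 := by
  have hη₀ : η ≠ 0 := by positivity
  have hθη := mul_sub_eq_of_eq_div hη₀ hden hθdef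
  set z := β • xg + (1 - β) • x - xstar
  set v := gradient f xg
  set m := ∫ ω, g ω ∂P
  have hz : ‖z‖ ^ 2 = (1 - β) * ‖x - xstar‖ ^ 2 + β * ‖xg - xstar‖ ^ 2 +
      (β ^ 2 - β) * ‖x - xg‖ ^ 2 := by
    rw [show z = β • (xg - xstar) + (1 - β) • (x - xstar) by module,
      norm_smul_add_one_sub_smul_sq, sub_sub_sub_cancel_right, norm_sub_rev xg x]
    ring
  have hgrad : 2 * η ^ 2 * γ * ⟪v, (η⁻¹ * p) • z⟫ = 2 * (η * (p * γ)) * ⟪z, v⟫ := by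
    rw [real_inner_smul_right, real_inner_comm]
    field_simp
  have hyoung := two_mul_real_inner_le_add_mul_sq hα z (v - m)
  rw [norm_sub_rev v m, inner_sub_right] at hyoung
  have hstep : ∀ ω, (η • (xg - (p * γ) • g ω) + (p - η) • xf + ((1 - p) * (1 - β)) • x +
      ((1 - p) * β) • xg) - xstar = z - (η * (p * γ)) • g ω :=
    fun ω ↦ accelerated_step_sub_eq hθη hxg _ _ _
  simp only [hstep]
  rw [integral_norm_sub_smul_sq hg, accelerated_step_direction_eq hη₀ hθη hxg, hgrad]
  linear_combination (η * (p * γ)) * hyoung + (1 + α * p * γ * η) * hz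

theorem accelerated_step_recursion {d : ℕ} (hd : 1 ≤ d) (L μ : ℝ) (hL : 0 < L) (hμ : 0 < μ)
    (f : EuclideanSpace ℝ (Fin d) → ℝ)
    (hdiff : Differentiable ℝ f)
    (hsmooth : ∀ x y : EuclideanSpace ℝ (Fin d),
      ‖gradient f x - gradient f y‖ ≤ L * ‖x - y‖)
    (hsc : ∀ x y : EuclideanSpace ℝ (Fin d),
      μ / 2 * ‖x - y‖ ^ 2 ≤ f x - f y - ⟪gradient f y, x - y⟫)
    (γ p η α β θ : ℝ) (hγ : 0 < γ) (hp : 0 < p) (hη : 1 ≤ η) (hα : 0 < α)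
    (hden : β * p * η⁻¹ - 1 ≠ 0)
    (hθdef : θ = (p * η⁻¹ - 1) / (β * p * η⁻¹ - 1)) (hθ : 0 < θ)
    (x xf xstar : EuclideanSpace ℝ (Fin d))
    {Ω : Type*} [MeasurableSpace Ω] (P : Measure Ω) [IsProbabilityMeasure P]
    (g : Ω → EuclideanSpace ℝ (Fin d)) (hg : MemLp g 2 P)
    (xg : EuclideanSpace ℝ (Fin d)) (hxg : xg = θ • xf + (1 - θ) • x) :
    ∫ ω, ‖(η • (xg - (p * γ) • g ω) + (p - η) • xf + ((1 - p) * (1 - β)) • x +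
          ((1 - p) * β) • xg) - xstar‖ ^ 2 ∂P ≤
      (1 + α * p * γ * η) * (1 - β) * ‖x - xstar‖ ^ 2 +
        (1 + α * p * γ * η) * β * ‖xg - xstar‖ ^ 2 +
        (1 + α * p * γ * η) * (β ^ 2 - β) * ‖x - xg‖ ^ 2 +
        p ^ 2 * η ^ 2 * γ ^ 2 * ∫ ω, ‖g ω‖ ^ 2 ∂P -
        2 * η ^ 2 * γ * ⟪gradient f xg, xg + (p * η⁻¹ - 1) • xf - (η⁻¹ * p) • xstar⟫ +
        p * η * γ / α * ‖(∫ ω, g ω ∂P) - gradient f xg‖ ^ 2 :=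
  accelerated_step_recursion_general f γ p η α β θ hγ hp hη hα hden hθdef x xf xstar P g hg xg hxg
end

section
/- There exists an absolute constant C > 0 (independent of all parameters) such that the following holds. Let (S, 𝒮) be a measurable space, let Q be a Markov kernel on S × 𝒮 with invariant probability distribution π, and let τ ≥ 1 be an integer such that for every integer k ≥ 1, sup_{z, z' ∈ S} (1/2)·‖Q^k(z, ·) − Q^k(z', ·)‖_TV ≤ (1/4)^{⌊k/τ⌋} (uniform geometric ergodicity with mixing time τ). Let (Z_i)_{i ≥ 0} be the canonical Markov chain with kernel Q started from an arbitrary initial distribution ξ on (S, 𝒮). Let d ≥ 1, σ ≥ 0, and let g : S → ℝ^d be a bounded measurable function with ∫ g dπ = 0 and ‖g(z)‖ ≤ σ for all z ∈ S. Then for every integer n ≥ 1: E_ξ[ ‖ (1/n)·Σ_{i=1}^n g(Z_i) ‖² ] ≤ C·τ·σ²/n. -/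
/-!
Expanding the square, `E ‖∑ g (Z i)‖²` is the sum of the correlations `E ⟪g (Z i), g (Z j)⟫`.
By the Markov property, for `i ≤ j` such a correlation is `E ⟪g (Z i), ∫ g d(Q^(j-i) (Z i))⟫`.
Since `π` is invariant and `∫ g dπ = 0`, the inner integral is `∫ g dQ^m(z) - ∫ g dπ`, whose norm
is at most `2σ` times the setwise distance of `Q^m(z)` from `π = ∫ Q^m(z') dπ(z')`, hence at most
`2σ (1/4)^⌊m/τ⌋`. Each row of the correlation matrix therefore sums to at most
`2 · 2σ² · τ / (1 - 1/4)`, which gives the constant `C = 16/3`.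
-/

open MeasureTheory ProbabilityTheory
open scoped ProbabilityTheory

/-- Iterates `Q^k` of a Markov kernel. -/
noncomputable def kernelPow {S : Type} [MeasurableSpace S] (Q : Kernel S S) : ℕ → Kernel S S
  | 0 => Kernel.id
  | n + 1 => Q ∘ₖ kernelPow Q n

/-- The process `Z` is a Markov chain with transition kernel `Q`: conditionally on the whole
past `(Z_0, …, Z_k)`, the next state `Z_{k+1}` is distributed as `Q (Z_k)`. -/
def IsMarkovChainWith {S : Type} [MeasurableSpace S] {Ω : Type} [MeasurableSpace Ω]
    (P : Measure Ω) (Q : Kernel S S) (Z : ℕ → Ω → S) : Prop :=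
  ∀ k : ℕ,
    Measure.map (fun ω => ((fun i : Fin (k + 1) => Z i ω), Z (k + 1) ω)) P =
      (Measure.map (fun ω => (fun i : Fin (k + 1) => Z i ω)) P) ⊗ₘ
        (Q.comap (fun v : Fin (k + 1) → S => v (Fin.last k)) (measurable_pi_apply _))

open Finset
open scoped InnerProductSpace

section KernelPow

variable {S : Type} [MeasurableSpace S]

theorem kernelPow_eq_pow (Q : Kernel S S) (n : ℕ) : kernelPow Q n = Q ^ n := by
  induction n with
  | zero => rfl
  | succ n ih => rw [pow_succ', ← ih]; rfl

instance ProbabilityTheory.Kernel.isMarkovKernel_pow (κ : Kernel S S) [IsMarkovKernel κ]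
    (n : ℕ) : IsMarkovKernel (κ ^ n) := by
  induction n with
  | zero => exact inferInstanceAs (IsMarkovKernel Kernel.id)
  | succ n ih => rw [pow_succ]; exact inferInstanceAs (IsMarkovKernel (_ ∘ₖ _))

theorem ProbabilityTheory.Kernel.pow_comp_eq_self {κ : Kernel S S} {π : Measure S}
    (hπ : κ ∘ₘ π = π) (n : ℕ) : (κ ^ n) ∘ₘ π = π := by
  induction n with
  | zero => exact Measure.bind_dirac
  | succ n ih =>
    rw [pow_succ', show κ * κ ^ n = κ ∘ₖ (κ ^ n) from rfl, ← Measure.comp_assoc, ih, hπ]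

end KernelPow

section TotalVariation

variable {S : Type} [MeasurableSpace S] {μ ν : Measure S} [IsProbabilityMeasure μ]
  [IsProbabilityMeasure ν] {ε : ℝ}

theorem abs_integral_sub_integral_le_of_nonneg_of_le
    (hμν : ∀ A, MeasurableSet A → |μ.real A - ν.real A| ≤ ε) {f : S → ℝ} (hf : Measurable f)
    {M : ℝ} (hf0 : ∀ x, 0 ≤ f x) (hfM : ∀ x, f x ≤ M) :
    |∫ x, f x ∂μ - ∫ x, f x ∂ν| ≤ M * ε := by
  have hM : 0 ≤ M := by
    obtain ⟨x⟩ := nonempty_of_isProbabilityMeasure μ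
    exact (hf0 x).trans (hfM x)
  set layer : Measure S → ℝ → ℝ := fun ρ t => ρ.real {x | t ≤ f x}
  have layer_cake (ρ : Measure S) [IsProbabilityMeasure ρ] :
      ∫ x, f x ∂ρ = ∫ t in Set.Ioc 0 M, layer ρ t :=
    (Integrable.of_bound hf.aestronglyMeasurable M (ae_of_all _ fun x => by
      rw [Real.norm_of_nonneg (hf0 x)]; exact hfM x)).integral_eq_integral_Ioc_meas_le
      (ae_of_all _ hf0) (ae_of_all _ hfM)
  have integrable_layer (ρ : Measure S) [IsProbabilityMeasure ρ] :
      IntegrableOn (layer ρ) (Set.Ioc 0 M) :=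
    Integrable.of_bound (Antitone.measurable (f := layer ρ)
      fun s t hst => measureReal_mono fun x hx => hst.trans hx).aestronglyMeasurable 1
      (ae_of_all _ fun t => by
        rw [Real.norm_of_nonneg measureReal_nonneg]; exact measureReal_le_one)
  rw [layer_cake μ, layer_cake ν, ← integral_sub (integrable_layer μ) (integrable_layer ν),
    ← Real.norm_eq_abs]
  calc _ ≤ ε * volume.real (Set.Ioc 0 M) :=
        norm_setIntegral_le_of_norm_le_const measure_Ioc_lt_top fun t _ =>
          hμν _ (hf measurableSet_Ici)
    _ = M * ε := by rw [Real.volume_real_Ioc_of_le hM, sub_zero, mul_comm]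

theorem abs_integral_sub_integral_le
    (hμν : ∀ A, MeasurableSet A → |μ.real A - ν.real A| ≤ ε) {f : S → ℝ} (hf : Measurable f)
    {σ : ℝ} (hfσ : ∀ x, |f x| ≤ σ) :
    |∫ x, f x ∂μ - ∫ x, f x ∂ν| ≤ 2 * σ * ε := by
  have integrable (ρ : Measure S) [IsProbabilityMeasure ρ] : Integrable f ρ :=
    Integrable.of_bound hf.aestronglyMeasurable σ (ae_of_all _ hfσ)
  have shifted := abs_integral_sub_integral_le_of_nonneg_of_le hμν (hf.add_const σ) (M := 2 * σ)
    (fun x => by linarith [neg_abs_le (f x), hfσ x])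
    (fun x => by linarith [le_abs_self (f x), hfσ x])
  rwa [integral_add (integrable μ) (integrable_const σ), integral_add (integrable ν)
    (integrable_const σ), integral_const, integral_const, probReal_univ, probReal_univ,
    add_sub_add_right_eq_sub] at shifted

variable {E : Type*} [NormedAddCommGroup E] [InnerProductSpace ℝ E] [CompleteSpace E]

theorem norm_integral_sub_integral_le
    (hμν : ∀ A, MeasurableSet A → |μ.real A - ν.real A| ≤ ε) {g : S → E}
    (hg : StronglyMeasurable g) {σ : ℝ} (hgσ : ∀ x, ‖g x‖ ≤ σ) :
    ‖∫ x, g x ∂μ - ∫ x, g x ∂ν‖ ≤ 2 * σ * ε := by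
  have integrable (ρ : Measure S) [IsProbabilityMeasure ρ] : Integrable g ρ :=
    Integrable.of_bound hg.aestronglyMeasurable σ (ae_of_all _ hgσ)
  set w := ∫ x, g x ∂μ - ∫ x, g x ∂ν
  have hσ : 0 ≤ σ := by
    obtain ⟨x⟩ := nonempty_of_isProbabilityMeasure μ
    exact (norm_nonneg _).trans (hgσ x)
  have hε : 0 ≤ ε := by simpa using hμν ∅ MeasurableSet.empty
  -- test `w` against itself: `‖w‖² = ∫ ⟪w, g⟫ dμ - ∫ ⟪w, g⟫ dν`
  have hw : ‖w‖ ^ 2 ≤ ‖w‖ * (2 * σ * ε) := by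
    have hproj := abs_integral_sub_integral_le hμν (f := fun x => ⟪w, g x⟫_ℝ)
      (stronglyMeasurable_const.inner hg).measurable (σ := ‖w‖ * σ) fun x =>
      (abs_real_inner_le_norm w (g x)).trans (mul_le_mul_of_nonneg_left (hgσ x) (norm_nonneg w))
    rw [integral_inner (integrable μ), integral_inner (integrable ν), ← inner_sub_right,
      real_inner_self_eq_norm_sq] at hproj
    linarith [le_abs_self (‖w‖ ^ 2)]
  nlinarith [norm_nonneg w, mul_nonneg (mul_nonneg zero_le_two hσ) hε]

end TotalVariation

section Stationary

variable {S : Type} [MeasurableSpace S]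

theorem ProbabilityTheory.Kernel.measureReal_comp_eq_integral {β : Type*} [MeasurableSpace β]
    (κ : Kernel S β) [IsFiniteKernel κ] (π : Measure S) {A : Set β} (hA : MeasurableSet A) :
    (κ ∘ₘ π).real A = ∫ z, (κ z).real A ∂π := by
  simp only [measureReal_def]
  rw [Measure.bind_apply hA κ.aemeasurable,
    ← integral_toReal (κ.measurable_coe hA).aemeasurable (ae_of_all _ fun z => measure_lt_top _ _)]

theorem ProbabilityTheory.Kernel.abs_sub_measureReal_comp_le {β : Type*} [MeasurableSpace β]
    {κ : Kernel S β} [IsMarkovKernel κ] {π : Measure S} [IsProbabilityMeasure π] {A : Set β}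
    (hA : MeasurableSet A) {c ε : ℝ} (h : ∀ z, |c - (κ z).real A| ≤ ε) :
    |c - (κ ∘ₘ π).real A| ≤ ε := by
  have hint : Integrable (fun z => (κ z).real A) π :=
    Integrable.of_bound (κ.measurable_coe hA).ennreal_toReal.aestronglyMeasurable 1
      (ae_of_all _ fun z => by
        rw [Real.norm_of_nonneg measureReal_nonneg]; exact measureReal_le_one)
  rw [κ.measureReal_comp_eq_integral π hA, ← Real.norm_eq_abs]
  calc ‖c - ∫ z, (κ z).real A ∂π‖ = ‖∫ z, (c - (κ z).real A) ∂π‖ := by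
        rw [integral_sub (integrable_const c) hint, MeasureTheory.integral_const, probReal_univ,
          one_smul]
    _ ≤ ε * π.real Set.univ := norm_integral_le_of_norm_le_const (ae_of_all _ h)
    _ = ε := by rw [probReal_univ, mul_one]

variable {E : Type*} [NormedAddCommGroup E] [InnerProductSpace ℝ E] [CompleteSpace E]

theorem ProbabilityTheory.Kernel.norm_integral_le_of_comp_eq_self {κ : Kernel S S}
    [IsMarkovKernel κ] {π : Measure S} [IsProbabilityMeasure π] (hπ : κ ∘ₘ π = π) {ε : ℝ}
    (hκ : ∀ z z' A, MeasurableSet A → |(κ z).real A - (κ z').real A| ≤ ε) {g : S → E}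
    (hg : StronglyMeasurable g) (hg0 : ∫ x, g x ∂π = 0) {σ : ℝ} (hgσ : ∀ x, ‖g x‖ ≤ σ) (z : S) :
    ‖∫ x, g x ∂(κ z)‖ ≤ 2 * σ * ε := by
  have hz := norm_integral_sub_integral_le (μ := κ z) (ν := π)
    (fun A hA => hπ ▸ abs_sub_measureReal_comp_le hA (hκ z · A hA)) hg hgσ
  rwa [hg0, sub_zero] at hz

end Stationary

theorem abs_measureReal_pow_sub_le_of_mixing {S : Type} [MeasurableSpace S] {Q : Kernel S S}
    [IsMarkovKernel Q] {τ : ℕ}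
    (hmix : ∀ k : ℕ, 1 ≤ k → ∀ z z' : S, ∀ A : Set S, MeasurableSet A →
      |((kernelPow Q k) z A).toReal - ((kernelPow Q k) z' A).toReal| ≤ (1 / 4 : ℝ) ^ (k / τ))
    (k : ℕ) (z z' : S) (A : Set S) (hA : MeasurableSet A) :
    |((Q ^ k) z).real A - ((Q ^ k) z').real A| ≤ (1 / 4 : ℝ) ^ (k / τ) := by
  rcases Nat.eq_zero_or_pos k with rfl | hk
  · rw [Nat.zero_div, pow_zero (1 / 4 : ℝ), abs_sub_le_iff]
    constructor <;> linarith [measureReal_le_one (μ := (Q ^ 0) z) (s := A),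
      measureReal_le_one (μ := (Q ^ 0) z') (s := A), measureReal_nonneg (μ := (Q ^ 0) z) (s := A),
      measureReal_nonneg (μ := (Q ^ 0) z') (s := A)]
  · simpa only [kernelPow_eq_pow, measureReal_def] using hmix k hk z z' A hA

namespace IsMarkovChainWith

variable {S Ω : Type} [MeasurableSpace S] [MeasurableSpace Ω] {P : Measure Ω}
  [IsProbabilityMeasure P] {Q : Kernel S S} [IsMarkovKernel Q] {Z : ℕ → Ω → S}

theorem integral_comp_succ (hMC : IsMarkovChainWith P Q Z) (hZ : ∀ k, Measurable (Z k))
    {φ : S × S → ℝ} (hφ : StronglyMeasurable φ) {B : ℝ} (hφB : ∀ p, ‖φ p‖ ≤ B) {j K : ℕ}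
    (hj : j ≤ K) :
    ∫ ω, φ (Z j ω, Z (K + 1) ω) ∂P = ∫ ω, ∫ s, φ (Z j ω, s) ∂(Q (Z K ω)) ∂P := by
  set past : Ω → (Fin (K + 1) → S) := fun ω i => Z i ω
  have hpast : Measurable past := measurable_pi_lambda _ fun i => hZ i
  set ψ : (Fin (K + 1) → S) × S → ℝ := fun p => φ (p.1 ⟨j, by omega⟩, p.2)
  have hψ : StronglyMeasurable ψ :=
    hφ.comp_measurable (((measurable_pi_apply _).comp measurable_fst).prodMk measurable_snd)
  calc ∫ ω, φ (Z j ω, Z (K + 1) ω) ∂P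
      = ∫ p, ψ p ∂(P.map fun ω => (past ω, Z (K + 1) ω)) :=
        (integral_map (hpast.prodMk (hZ _)).aemeasurable hψ.aestronglyMeasurable).symm
    _ = ∫ v, ∫ s, ψ (v, s) ∂(Q.comap (fun v : Fin (K + 1) → S => v (Fin.last K))
          (measurable_pi_apply _) v) ∂(P.map past) := by
        rw [hMC K, Measure.integral_compProd
          (Integrable.of_bound hψ.aestronglyMeasurable B (ae_of_all _ fun p => hφB _))]
    _ = ∫ ω, ∫ s, φ (Z j ω, s) ∂(Q (Z K ω)) ∂P :=
        integral_map hpast.aemeasurable hψ.integral_kernel_prod_right'.aestronglyMeasurable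

theorem integral_comp_add (hMC : IsMarkovChainWith P Q Z) (hZ : ∀ k, Measurable (Z k))
    (k m : ℕ) {φ : S × S → ℝ} (hφ : StronglyMeasurable φ) {B : ℝ} (hφB : ∀ p, ‖φ p‖ ≤ B) :
    ∫ ω, φ (Z k ω, Z (k + m) ω) ∂P = ∫ ω, ∫ s, φ (Z k ω, s) ∂((Q ^ m) (Z k ω)) ∂P := by
  induction m generalizing φ with
  | zero =>
    refine integral_congr_ae (ae_of_all _ fun ω => ?_)
    exact (integral_dirac' _ _ (hφ.comp_measurable measurable_prodMk_left)).symm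
  | succ m ih =>
    set φ₁ : S × S → ℝ := fun p => ∫ s, φ (p.1, s) ∂(Q p.2)
    have hφ₁ : StronglyMeasurable φ₁ :=
      (hφ.comp_measurable ((measurable_fst.comp measurable_fst).prodMk measurable_snd)
        ).integral_kernel_prod_right' (κ := Q.prodMkLeft S)
    have hφ₁B : ∀ p, ‖φ₁ p‖ ≤ B := fun p =>
      (norm_integral_le_of_norm_le_const (ae_of_all _ fun s => hφB _)).trans (by simp)
    calc ∫ ω, φ (Z k ω, Z (k + (m + 1)) ω) ∂P = ∫ ω, φ₁ (Z k ω, Z (k + m) ω) ∂P :=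
          integral_comp_succ (K := k + m) hMC hZ hφ hφB (Nat.le_add_right k m)
      _ = ∫ ω, ∫ s, φ₁ (Z k ω, s) ∂((Q ^ m) (Z k ω)) ∂P := ih hφ₁ hφ₁B
      _ = ∫ ω, ∫ s, φ (Z k ω, s) ∂((Q ^ (m + 1)) (Z k ω)) ∂P := by
          refine integral_congr_ae (ae_of_all _ fun ω => ?_)
          rw [pow_succ', show Q * Q ^ m = Q ∘ₖ (Q ^ m) from rfl]
          exact (Kernel.integral_comp (Integrable.of_bound
            (hφ.comp_measurable measurable_prodMk_left).aestronglyMeasurable B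
              (ae_of_all _ fun s => hφB _))).symm

end IsMarkovChainWith

theorem IsMarkovChainWith.integral_inner_le {S Ω : Type} [MeasurableSpace S] [MeasurableSpace Ω]
    {P : Measure Ω} [IsProbabilityMeasure P] {Q : Kernel S S} [IsMarkovKernel Q]
    {Z : ℕ → Ω → S} (hMC : IsMarkovChainWith P Q Z) (hZ : ∀ k, Measurable (Z k))
    {π : Measure S} [IsProbabilityMeasure π] (hπ : Q ∘ₘ π = π) {ε : ℕ → ℝ}
    (hmix : ∀ m z z' A, MeasurableSet A → |((Q ^ m) z).real A - ((Q ^ m) z').real A| ≤ ε m)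
    {E : Type*} [NormedAddCommGroup E] [InnerProductSpace ℝ E] [CompleteSpace E] {g : S → E}
    (hg : StronglyMeasurable g) (hg0 : ∫ x, g x ∂π = 0) {σ : ℝ} (hgσ : ∀ x, ‖g x‖ ≤ σ)
    (i j : ℕ) :
    ∫ ω, ⟪g (Z i ω), g (Z j ω)⟫_ℝ ∂P ≤ 2 * σ ^ 2 * ε (Nat.dist i j) := by
  wlog hij : i ≤ j generalizing i j
  · simpa only [real_inner_comm, Nat.dist_comm] using this j i (by omega)
  obtain ⟨m, rfl⟩ := Nat.exists_eq_add_of_le hij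
  rw [Nat.dist_eq_sub_of_le hij, Nat.add_sub_cancel_left]
  have hσ : 0 ≤ σ := by
    obtain ⟨x⟩ := nonempty_of_isProbabilityMeasure π
    exact (norm_nonneg _).trans (hgσ x)
  have hφ : StronglyMeasurable fun p : S × S => ⟪g p.1, g p.2⟫_ℝ :=
    (hg.comp_measurable measurable_fst).inner (hg.comp_measurable measurable_snd)
  have hφB (p : S × S) : ‖⟪g p.1, g p.2⟫_ℝ‖ ≤ σ ^ 2 :=
    (norm_inner_le_norm _ _).trans (by nlinarith [hgσ p.1, hgσ p.2, norm_nonneg (g p.1)])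
  have hcorr (z : S) : ‖∫ s, g s ∂((Q ^ m) z)‖ ≤ 2 * σ * ε m :=
    Kernel.norm_integral_le_of_comp_eq_self (Kernel.pow_comp_eq_self hπ m) (hmix m) hg hg0 hgσ z
  have hcond (z : S) : ‖∫ s, ⟪g z, g s⟫_ℝ ∂((Q ^ m) z)‖ ≤ 2 * σ ^ 2 * ε m := by
    rw [integral_inner (Integrable.of_bound hg.aestronglyMeasurable σ (ae_of_all _ hgσ))]
    calc _ ≤ ‖g z‖ * ‖∫ s, g s ∂((Q ^ m) z)‖ := norm_inner_le_norm _ _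
      _ ≤ σ * (2 * σ * ε m) := mul_le_mul (hgσ z) (hcorr z) (norm_nonneg _) hσ
      _ = 2 * σ ^ 2 * ε m := by ring
  calc ∫ ω, ⟪g (Z i ω), g (Z (i + m) ω)⟫_ℝ ∂P
      = ∫ ω, ∫ s, ⟪g (Z i ω), g s⟫_ℝ ∂((Q ^ m) (Z i ω)) ∂P := hMC.integral_comp_add hZ i m hφ hφB
    _ ≤ 2 * σ ^ 2 * ε m * P.real Set.univ :=
        (Real.le_norm_self _).trans
          (norm_integral_le_of_norm_le_const (ae_of_all _ fun ω => hcond _))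
    _ = 2 * σ ^ 2 * ε m := by rw [probReal_univ, mul_one]

theorem Finset.sum_range_dist_le {M : Type*} [AddCommMonoid M] [PartialOrder M]
    [IsOrderedAddMonoid M] {e : ℕ → M} (he : ∀ m, 0 ≤ e m) {i n : ℕ} (hi : i < n) :
    ∑ j ∈ range n, e (Nat.dist i j) ≤ 2 • ∑ m ∈ range n, e m := by
  rw [← sum_range_add_sum_Ico _ hi.le, two_nsmul]
  refine add_le_add ?_ ?_
  · -- for `j < i`, reflecting `j ↦ i - 1 - j` turns `dist i j` into `j + 1`
    rw [← sum_range_reflect]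
    calc ∑ j ∈ range i, e (Nat.dist i (i - 1 - j)) = ∑ j ∈ range i, e (j + 1) :=
          sum_congr rfl fun j hj => by
            rw [Nat.dist_eq_sub_of_le_right (by omega)]; congr 1; have := mem_range.1 hj; omega
      _ ≤ ∑ m ∈ range (i + 1), e m := by
          rw [sum_range_succ']; exact le_add_of_nonneg_right (he 0)
      _ ≤ ∑ m ∈ range n, e m :=
          sum_le_sum_of_subset_of_nonneg (range_subset_range.2 hi) fun m _ _ => he m
  · rw [sum_Ico_eq_sum_range]
    calc ∑ k ∈ range (n - i), e (Nat.dist i (i + k)) = ∑ k ∈ range (n - i), e k :=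
          sum_congr rfl fun k _ => by
            rw [Nat.dist_eq_sub_of_le (by omega), Nat.add_sub_cancel_left]
      _ ≤ ∑ m ∈ range n, e m :=
          sum_le_sum_of_subset_of_nonneg (range_subset_range.2 (by omega)) fun m _ _ => he m

theorem Finset.sum_range_mul_comp_div {M : Type*} [AddCommMonoid M] (f : ℕ → M) (τ q : ℕ) :
    ∑ m ∈ range (τ * q), f (m / τ) = τ • ∑ i ∈ range q, f i := by
  induction q with
  | zero => simp
  | succ q ih =>
    have hblock : ∑ k ∈ range τ, f ((τ * q + k) / τ) = τ • f q := by
      calc ∑ k ∈ range τ, f ((τ * q + k) / τ) = ∑ _k ∈ range τ, f q :=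
            sum_congr rfl fun k hk => by
              have hk := mem_range.1 hk
              rw [Nat.mul_add_div (by omega), Nat.div_eq_of_lt hk, add_zero]
        _ = τ • f q := by rw [sum_const, card_range]
    rw [Nat.mul_succ, sum_range_add, ih, hblock, sum_range_succ, smul_add]

theorem Finset.sum_range_pow_div_le {r : ℝ} (hr0 : 0 ≤ r) (hr1 : r < 1) {τ : ℕ} (hτ : 0 < τ)
    (n : ℕ) : ∑ m ∈ range n, r ^ (m / τ) ≤ τ / (1 - r) := by
  calc ∑ m ∈ range n, r ^ (m / τ) ≤ ∑ m ∈ range (τ * n), r ^ (m / τ) :=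
        sum_le_sum_of_subset_of_nonneg (range_subset_range.2 (Nat.le_mul_of_pos_left n hτ))
          fun _ _ _ => pow_nonneg hr0 _
    _ = τ * ∑ i ∈ range n, r ^ i := by rw [sum_range_mul_comp_div, nsmul_eq_mul]
    _ ≤ τ * (1 / (1 - r)) := by
        refine mul_le_mul_of_nonneg_left ?_ (Nat.cast_nonneg τ)
        have hgeom := geom_sum_Ico_le_of_lt_one (m := 0) (n := n) hr0 hr1
        rwa [← range_eq_Ico, pow_zero] at hgeom
    _ = τ / (1 - r) := mul_one_div _ _

theorem integral_norm_sum_sq_le {Ω : Type*} [MeasurableSpace Ω] {P : Measure Ω}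
    {E : Type*} [NormedAddCommGroup E] [InnerProductSpace ℝ E] {X : ℕ → Ω → E}
    (hX : ∀ i j, Integrable (fun ω => ⟪X i ω, X j ω⟫_ℝ) P) {c : ℕ → ℝ} (hc : ∀ m, 0 ≤ c m)
    (hcov : ∀ i j, ∫ ω, ⟪X i ω, X j ω⟫_ℝ ∂P ≤ c (Nat.dist i j)) (n : ℕ) :
    ∫ ω, ‖∑ i ∈ range n, X i ω‖ ^ 2 ∂P ≤ 2 * n * ∑ m ∈ range n, c m := by
  have expand (ω : Ω) :
      ‖∑ i ∈ range n, X i ω‖ ^ 2 = ∑ i ∈ range n, ∑ j ∈ range n, ⟪X i ω, X j ω⟫_ℝ := by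
    rw [← real_inner_self_eq_norm_sq, sum_inner]
    exact sum_congr rfl fun i _ => inner_sum _ _ _
  calc ∫ ω, ‖∑ i ∈ range n, X i ω‖ ^ 2 ∂P
      = ∑ i ∈ range n, ∑ j ∈ range n, ∫ ω, ⟪X i ω, X j ω⟫_ℝ ∂P := by
        simp_rw [expand]
        rw [integral_finsetSum _ fun i _ => integrable_finsetSum _ fun j _ => hX i j]
        exact sum_congr rfl fun i _ => integral_finsetSum _ fun j _ => hX i j
    _ ≤ ∑ i ∈ range n, ∑ j ∈ range n, c (Nat.dist i j) :=
        sum_le_sum fun i _ => sum_le_sum fun j _ => hcov i j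
    _ ≤ ∑ i ∈ range n, 2 • ∑ m ∈ range n, c m :=
        sum_le_sum fun i hi => sum_range_dist_le hc (mem_range.1 hi)
    _ = 2 * n * ∑ m ∈ range n, c m := by
        rw [sum_const, card_range, nsmul_eq_mul, nsmul_eq_mul]; push_cast; ring

theorem markov_batching_variance_bound :
    ∃ C : ℝ, 0 < C ∧
      ∀ (S : Type) (_ : MeasurableSpace S) (Q : Kernel S S), IsMarkovKernel Q →
        ∀ (π : Measure S), IsProbabilityMeasure π → π.bind (fun z => Q z) = π →
          ∀ τ : ℕ, 1 ≤ τ →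
            (∀ k : ℕ, 1 ≤ k → ∀ z z' : S, ∀ A : Set S, MeasurableSet A →
              |((kernelPow Q k) z A).toReal - ((kernelPow Q k) z' A).toReal| ≤
                (1 / 4 : ℝ) ^ (k / τ)) →
            ∀ (d : ℕ), 1 ≤ d → ∀ σ : ℝ, 0 ≤ σ →
              ∀ g : S → EuclideanSpace ℝ (Fin d), Measurable g →
                (∫ z, g z ∂π = 0) → (∀ z, ‖g z‖ ≤ σ) →
                  ∀ (Ω : Type) (_ : MeasurableSpace Ω) (P : Measure Ω),
                    IsProbabilityMeasure P →
                    ∀ Z : ℕ → Ω → S, (∀ k, Measurable (Z k)) →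
                      IsMarkovChainWith P Q Z →
                      ∀ n : ℕ, 1 ≤ n →
                        ∫ ω, ‖(1 / (n : ℝ)) • ∑ i ∈ Finset.range n, g (Z (i + 1) ω)‖ ^ 2 ∂P ≤
                          C * τ * σ ^ 2 / n := by
  refine ⟨16 / 3, by norm_num, ?_⟩
  intro S _ Q _ π _ hπ τ hτ hmix d _ σ _ g hg hg0 hgσ Ω _ P _ Z hZ hMC n hn
  have hcov (i j : ℕ) : ∫ ω, ⟪g (Z (i + 1) ω), g (Z (j + 1) ω)⟫_ℝ ∂P ≤
      2 * σ ^ 2 * (1 / 4 : ℝ) ^ (Nat.dist i j / τ) := by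
    simpa only [Nat.dist_add_add_right] using hMC.integral_inner_le hZ hπ
      (abs_measureReal_pow_sub_le_of_mixing hmix) hg.stronglyMeasurable hg0 hgσ (i + 1) (j + 1)
  have hint (i j : ℕ) : Integrable (fun ω => ⟪g (Z (i + 1) ω), g (Z (j + 1) ω)⟫_ℝ) P :=
    Integrable.of_bound ((hg.comp (hZ _)).inner (hg.comp (hZ _))).aestronglyMeasurable (σ ^ 2)
      (ae_of_all _ fun ω => (norm_inner_le_norm _ _).trans <| by
        nlinarith [hgσ (Z (i + 1) ω), hgσ (Z (j + 1) ω), norm_nonneg (g (Z (i + 1) ω))])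
  have hsum := integral_norm_sum_sq_le hint
    (c := fun m => 2 * σ ^ 2 * (1 / 4 : ℝ) ^ (m / τ)) (fun m => by positivity) hcov n
  have hgeom := sum_range_pow_div_le (r := 1 / 4) (by norm_num) (by norm_num) hτ n
  have hn' : (0 : ℝ) < n := by exact_mod_cast hn
  calc ∫ ω, ‖(1 / (n : ℝ)) • ∑ i ∈ range n, g (Z (i + 1) ω)‖ ^ 2 ∂P
      = (1 / (n : ℝ)) ^ 2 * ∫ ω, ‖∑ i ∈ range n, g (Z (i + 1) ω)‖ ^ 2 ∂P := by
        simp_rw [norm_smul, mul_pow, Real.norm_of_nonneg (one_div_pos.2 hn').le]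
        exact integral_const_mul _ _
    _ ≤ (1 / (n : ℝ)) ^ 2 * (2 * n * (2 * σ ^ 2 * (τ / (1 - 1 / 4)))) := by
        rw [← mul_sum] at hsum
        gcongr
        exact hsum.trans (by gcongr)
    _ = 16 / 3 * τ * σ ^ 2 / n := by field_simp; ring
end
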